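/- arXiv:1407.5743 — 7 statements merged into one kernel-verified Lean document; each statement's English description precedes it below -/
import Mathlib

section
/- Let X and Y be topological spaces, (Z, λ) an equiconnected space, and f : X × Y → Z a mapping such that x ↦ f(x,y) is continuous for every y ∈ Y. Suppose there exist a sequence ((φ_{i,n})_{i∈I_n})_{n∈ℕ} of locally finite partitions of unity on X and families (x_{i,n})_{i∈I_n} of points of X such that: (a) y ↦ f(x_{i,n}, y) is continuous for every n and i ∈ I_n; (b) for every x ∈ X and every neighborhood U of x there exists n_0 such that for all n ≥ n_0 and i ∈ I_n, x ∈ supp φ_{i,n} implies x_{i,n} ∈ U; (c) the sequence of families (supp φ_{i,n} : i ∈ I_n)_{n∈ℕ} is uniformly pointwise finite in X. Then f is the pointwise limit of a sequence of continuous maps X × Y → Z. -/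
open Set Function Filter Topology

universe u

/-- An *equiconnecting* map on `Z`: a map `λ : Z × Z × [0,1] → Z`, continuous on
`Z × Z × [0,1]`, with `λ(x,y,0) = x`, `λ(x,y,1) = y` and `λ(x,x,t) = x`. -/
structure IsEquiconnecting {Z : Type*} [TopologicalSpace Z] (lam : Z → Z → ℝ → Z) : Prop where
  continuousOn : ContinuousOn (fun p : Z × Z × ℝ => lam p.1 p.2.1 p.2.2)
    (Set.univ ×ˢ Set.univ ×ˢ Set.Icc (0 : ℝ) 1)
  map_zero : ∀ x y : Z, lam x y 0 = x
  map_one : ∀ x y : Z, lam x y 1 = y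
  map_diag : ∀ x : Z, ∀ t ∈ Set.Icc (0 : ℝ) 1, lam x x t = x

/-- `lambdaIter lam n` is the map `λ_{n+1} : Z^{n+1} × S_{n+1} → Z` from the paper,
defined recursively. -/
noncomputable def lambdaIter {Z : Type*} (lam : Z → Z → ℝ → Z) :
    (n : ℕ) → (Fin (n + 1) → Z) → (Fin (n + 1) → ℝ) → Z
  | 0, x, _ => x 0
  | n + 1, x, a =>
      if 0 < a 0 + a 1 then
        lambdaIter lam n
          (Fin.cons (lam (x 0) (x 1) (a 1 / (a 0 + a 1))) fun i => x i.succ.succ)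
          (Fin.cons (a 0 + a 1) fun i => a i.succ.succ)
      else
        lambdaIter lam n (fun i => x i.succ) fun i => a i.succ

/-- `lambdaIterSet lam A n` is the set `λ^n(A)`:  `λ^0(A) = A` and
`λ^{n+1}(A) = λ(λ^n(A) × A × [0,1])`. -/
def lambdaIterSet {Z : Type*} (lam : Z → Z → ℝ → Z) (A : Set Z) : ℕ → Set Z
  | 0 => A
  | n + 1 => (fun p : Z × Z × ℝ => lam p.1 p.2.1 p.2.2) ''
      (lambdaIterSet lam A n ×ˢ A ×ˢ Set.Icc (0 : ℝ) 1)

/-- `λ^∞(A) = ⋃_{n ≥ 1} λ^n(A)`. -/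
def lambdaInftySet {Z : Type*} (lam : Z → Z → ℝ → Z) (A : Set Z) : Set Z :=
  ⋃ n : ℕ, lambdaIterSet lam A (n + 1)

/-- An equiconnected space `(Z, λ)` is locally convex if every point has arbitrarily small
neighborhoods `V` with `λ^∞(V)` inside a given neighborhood. -/
def IsLocallyConvexEquiconnected {Z : Type*} [TopologicalSpace Z] (lam : Z → Z → ℝ → Z) :
    Prop :=
  ∀ z : Z, ∀ U ∈ nhds z, ∃ V ∈ nhds z, lambdaInftySet lam V ⊆ U

/-- A map is Baire-one if it is the pointwise limit of a sequence of continuous maps. -/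
def BaireOne {Y Z : Type*} [TopologicalSpace Y] [TopologicalSpace Z] (g : Y → Z) : Prop :=
  ∃ h : ℕ → Y → Z, (∀ n, Continuous (h n)) ∧
    ∀ y, Filter.Tendsto (fun n => h n y) Filter.atTop (nhds (g y))

/-- A locally finite partition of unity on `X`: continuous `[0,1]`-valued functions whose
supports (closures of the sets where they are nonzero) form a locally finite family and whose
pointwise sum is `1`. -/
def IsLocFinPartitionOfUnity {I X : Type*} [TopologicalSpace X] (φ : I → X → ℝ) : Prop :=
  (∀ i, Continuous (φ i)) ∧ (∀ i x, φ i x ∈ Set.Icc (0 : ℝ) 1) ∧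
    (LocallyFinite fun i => closure (Function.support (φ i))) ∧ ∀ x, ∑ᶠ i, φ i x = 1

/-- A strong PP-space: for every dense `D ⊆ X` there are a sequence of locally finite
partitions of unity and families of points of `D` such that points attached to the supports
containing `x` converge to `x` uniformly in the index, in the sense of condition (3). -/
def IsStrongPPSpace (X : Type*) [TopologicalSpace X] : Prop :=
  ∀ D : Set X, Dense D →
    ∃ (I : ℕ → Type u) (φ : ∀ n, I n → X → ℝ) (p : ∀ n, I n → X),
      (∀ n, IsLocFinPartitionOfUnity (φ n)) ∧ (∀ n i, p n i ∈ D) ∧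
      ∀ x : X, ∀ U ∈ nhds x, ∃ n₀ : ℕ, ∀ n ≥ n₀, ∀ i : I n,
        x ∈ closure (Function.support (φ n i)) → p n i ∈ U

/-- A zero set: the preimage of `{0}` under a continuous function `X → [0,1]`. -/
def IsZeroSet {X : Type*} [TopologicalSpace X] (A : Set X) : Prop :=
  ∃ f : X → ℝ, Continuous f ∧ (∀ x, f x ∈ Set.Icc (0 : ℝ) 1) ∧ A = f ⁻¹' {0}

/-- A cozero set: the preimage of `(0,1]` under a continuous function `X → [0,1]`. -/
def IsCozeroSet {X : Type*} [TopologicalSpace X] (A : Set X) : Prop :=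
  ∃ f : X → ℝ, Continuous f ∧ (∀ x, f x ∈ Set.Icc (0 : ℝ) 1) ∧ A = f ⁻¹' Set.Ioc (0 : ℝ) 1

/-- A functionally ambiguous set: simultaneously a countable union of zero sets and a
countable intersection of cozero sets. -/
def IsFunctionallyAmbiguous {X : Type*} [TopologicalSpace X] (A : Set X) : Prop :=
  (∃ F : ℕ → Set X, (∀ n, IsZeroSet (F n)) ∧ A = ⋃ n, F n) ∧
    ∃ B : ℕ → Set X, (∀ n, IsCozeroSet (B n)) ∧ A = ⋂ n, B n

/-- A discrete family of sets: every point has a neighborhood meeting at most one member. -/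
def IsDiscreteFamily {I X : Type*} [TopologicalSpace X] (A : I → Set X) : Prop :=
  ∀ x : X, ∃ U ∈ nhds x, {i : I | (U ∩ A i).Nonempty}.Subsingleton

/-- Weakly collectionwise normal: every discrete family of zero sets can be separated by a
discrete family of cozero sets. -/
def WeaklyCollectionwiseNormal (X : Type*) [TopologicalSpace X] : Prop :=
  ∀ (S : Type u) (F : S → Set X), (∀ s, IsZeroSet (F s)) → IsDiscreteFamily F →
    ∃ U : S → Set X, (∀ s, IsCozeroSet (U s)) ∧ IsDiscreteFamily U ∧ ∀ s, F s ⊆ U s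

/-- A contracting structure on `Z`: a continuous `γ : Z × [0,1] → Z` with `γ(z,0) = z` and
`γ(z,1) = z₀`. -/
structure IsContracting {Z : Type*} [TopologicalSpace Z] (γ : Z → ℝ → Z) (z₀ : Z) :
    Prop where
  continuousOn : ContinuousOn (fun p : Z × ℝ => γ p.1 p.2) (Set.univ ×ˢ Set.Icc (0 : ℝ) 1)
  map_zero : ∀ z : Z, γ z 0 = z
  map_one : ∀ z : Z, γ z 1 = z₀

/-! The approximants are `λ`-combinations `g n (x, y)` of the points `f (p n i, y)` with the
weights `φ n i x`: the finitely many points of nonzero weight are folded in a fixed order, a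
point `z` of weight `a` moving the current point `c` of accumulated weight `s` to
`λ (c, z, a / (s + a))`.

Each `g n` is continuous: near a point only finitely many weights are involved, and where the
accumulated weight vanishes the current point may jump but stays close to a compact set, while
the next point then enters with share `1` and erases it.

`g n (x, y) → f (x, y)`: by (c) at most `K` points enter `g n (x, y)`, and by (b) and continuity
of `f (·, y)` they all lie, for large `n`, in any prescribed neighbourhood `V` of `f (x, y)`.
Since `λ (z, z, t) = z` and `[0, 1]` is compact, `V` can be chosen so small that `K` successive
applications of `λ` stay in a given neighbourhood `W`. -/

theorem Finset.filter_mem_sort_of_subset {ι : Type*} [LinearOrder ι] {s t : Finset ι}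
    (hst : s ⊆ t) :
    (t.sort).filter (· ∈ s) = s.sort := by
  refine List.Perm.eq_of_pairwise' ((t.pairwise_sort _).filter _) (s.pairwise_sort _) ?_
  rw [List.perm_ext_iff_of_nodup ((t.sort_nodup _).filter _) (s.sort_nodup _)]
  intro i
  simp only [List.mem_filter, Finset.mem_sort, decide_eq_true_eq]
  exact ⟨And.right, fun hi => ⟨hst hi, hi⟩⟩

namespace Equiconnected

noncomputable def ratio (s a : ℝ) : unitInterval := Set.projIcc 0 1 zero_le_one (a / (s + a))

theorem ratio_zero_right (s : ℝ) : ratio s 0 = 0 := by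
  simp only [ratio, add_zero, zero_div]
  exact Set.projIcc_left _

theorem ratio_zero_left {a : ℝ} (ha : a ≠ 0) : ratio 0 a = 1 := by
  simp only [ratio, zero_add, div_self ha]
  exact Set.projIcc_right _

theorem continuousAt_ratio {W : Type*} [TopologicalSpace W] {s a : W → ℝ} {w₀ : W}
    (hs : ContinuousAt s w₀) (ha : ContinuousAt a w₀) (hsa : s w₀ + a w₀ ≠ 0) :
    ContinuousAt (fun w => ratio (s w) (a w)) w₀ :=
  continuous_projIcc.continuousAt.comp (ha.div (hs.add ha) hsa)

variable {Z : Type*} (μ : Z × Z × unitInterval → Z)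

noncomputable def combine : Z → ℝ → List (Z × ℝ) → Z
  | c, _, [] => c
  | c, s, q :: l => combine (μ (c, q.1, ratio s q.2)) (s + q.2) l

variable {μ}

theorem combine_map_filter {ι : Type*} (h0 : ∀ c z, μ (c, z, 0) = c) (p : ι → Bool)
    (z : ι → Z) (a : ι → ℝ) (L : List ι) (hL : ∀ i ∈ L, p i = false → a i = 0) (c : Z) (s : ℝ) :
    combine μ c s ((L.filter p).map fun i => (z i, a i)) =
      combine μ c s (L.map fun i => (z i, a i)) := by
  induction L generalizing c s with
  | nil => rfl
  | cons i L ih =>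
    have hL' : ∀ j ∈ L, p j = false → a j = 0 := fun j hj => hL j (List.mem_cons_of_mem _ hj)
    cases hp : p i
    · rw [List.filter_cons_of_neg (by simp [hp]), ih hL']
      simp only [List.map_cons, combine, hL i List.mem_cons_self hp, ratio_zero_right, h0,
        add_zero]
    · simp only [List.filter_cons_of_pos hp, List.map_cons, combine]
      exact ih hL' _ _

theorem combine_zero_cons (h1 : ∀ c z, μ (c, z, 1) = z) (c z : Z) {a : ℝ} (ha : a ≠ 0)
    (l : List (Z × ℝ)) : combine μ c 0 ((z, a) :: l) = combine μ z a l := by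
  simp only [combine, ratio_zero_left ha, h1, zero_add]

section Finset

variable {ι : Type*} [LinearOrder ι] (μ) (z₀ : Z)

/-- The dummy start `z₀` has weight `0`, so the first nonzero weight overwrites it. -/
noncomputable def combineSort (t : Finset ι) (z : ι → Z) (a : ι → ℝ) : Z :=
  combine μ z₀ 0 (t.sort.map fun i => (z i, a i))

open Classical in
noncomputable def combineSupport (z : ι → Z) (a : ι → ℝ) : Z :=
  if h : (support a).Finite then combineSort μ z₀ h.toFinset z a else z₀

variable {μ z₀}

theorem combineSort_eq_of_subset (h0 : ∀ c z, μ (c, z, 0) = c) {s t : Finset ι} (hst : s ⊆ t)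
    (z : ι → Z) {a : ι → ℝ} (ha : ∀ i ∈ t, i ∉ s → a i = 0) :
    combineSort μ z₀ s z a = combineSort μ z₀ t z a := by
  rw [combineSort, ← Finset.filter_mem_sort_of_subset hst]
  refine combine_map_filter h0 _ z a _ (fun i hi his => ?_) _ _
  exact ha i ((Finset.mem_sort _).1 hi) (by simpa using his)

theorem combineSupport_eq (h0 : ∀ c z, μ (c, z, 0) = c) (z : ι → Z) {a : ι → ℝ} {t : Finset ι}
    (ht : support a ⊆ t) : combineSupport μ z₀ z a = combineSort μ z₀ t z a := by
  have hfin : (support a).Finite := t.finite_toSet.subset ht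
  rw [combineSupport, dif_pos hfin]
  refine combineSort_eq_of_subset h0 (by simpa using ht) z fun i _ hi => ?_
  simpa using hi

theorem combineSupport_mem (h0 : ∀ c z, μ (c, z, 0) = c)
    (h1 : ∀ c z, μ (c, z, 1) = z) {V W : Set Z} {K : ℕ}
    (hVW : ∀ l : List (Z × ℝ), l.length ≤ K → ∀ c ∈ V, (∀ q ∈ l, q.1 ∈ V) →
      ∀ s, combine μ c s l ∈ W)
    {y : ι → Z} {a : ι → ℝ} {t : Finset ι} (hat : ∀ i, a i ≠ 0 → i ∈ t) (htK : t.card ≤ K)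
    (hne : ∃ i, a i ≠ 0) (hy : ∀ i, a i ≠ 0 → y i ∈ V) : combineSupport μ z₀ y a ∈ W := by
  obtain ⟨j, hj⟩ := hne
  have hfin : (support a).Finite := t.finite_toSet.subset hat
  set S := hfin.toFinset
  have hS : ∀ i, i ∈ S.sort ↔ a i ≠ 0 := by simp [S]
  obtain ⟨j', rest, hrest⟩ := List.exists_cons_of_ne_nil (List.ne_nil_of_mem ((hS j).2 hj))
  have hj' : a j' ≠ 0 := (hS j').1 (hrest ▸ List.mem_cons_self)
  have hlen : rest.length + 1 ≤ K := by
    rw [← List.length_cons, ← hrest, Finset.length_sort]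
    exact (Finset.card_le_card (by simpa [S] using hat)).trans htK
  rw [combineSupport_eq h0 y (t := S) (by simp [S]), combineSort, hrest, List.map_cons,
    combine_zero_cons h1 _ _ hj']
  refine hVW _ (by simp only [List.length_map]; omega) _ (hy j' hj') ?_ _
  intro q hq
  obtain ⟨i, hi, rfl⟩ := List.mem_map.1 hq
  exact hy i ((hS i).1 (hrest ▸ List.mem_cons_of_mem _ hi))

end Finset

variable [TopologicalSpace Z]

theorem exists_nhds_forall_mem (hμ : Continuous μ) (hdiag : ∀ z t, μ (z, z, t) = z) {z : Z}
    {U : Set Z} (hU : U ∈ 𝓝 z) : ∃ V ∈ 𝓝 z, ∀ b ∈ V, ∀ b' ∈ V, ∀ t, μ (b, b', t) ∈ U := by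
  have hμ' : Continuous fun w : (Z × Z) × unitInterval => μ (w.1.1, w.1.2, w.2) := by fun_prop
  have h : ∀ᶠ q : Z × Z in 𝓝 (z, z), ∀ t ∈ (univ : Set unitInterval), μ (q.1, q.2, t) ∈ U :=
    isCompact_univ.eventually_forall_of_forall_eventually fun t _ =>
      hμ'.continuousAt.preimage_mem_nhds (by simpa [hdiag] using hU)
  rw [nhds_prod_eq] at h
  obtain ⟨V, hV, hVU⟩ :=
    (eventually_prod_self_iff (r := fun b b' => ∀ t ∈ univ, μ (b, b', t) ∈ U)).1 h
  exact ⟨V, hV, fun b hb b' hb' t => hVU b hb b' hb' t (mem_univ t)⟩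

theorem exists_nhds_combine_mem (hμ : Continuous μ) (hdiag : ∀ z t, μ (z, z, t) = z) {z : Z}
    {W : Set Z} (hW : W ∈ 𝓝 z) (K : ℕ) :
    ∃ V ∈ 𝓝 z, ∀ l : List (Z × ℝ), l.length ≤ K → ∀ c ∈ V, (∀ q ∈ l, q.1 ∈ V) →
      ∀ s, combine μ c s l ∈ W := by
  induction K generalizing W with
  | zero =>
    refine ⟨W, hW, fun l hl c hc _ s => ?_⟩
    rw [List.length_eq_zero_iff.1 (Nat.le_zero.1 hl)]
    exact hc
  | succ K ih =>
    obtain ⟨V₁, hV₁, hV₁W⟩ := ih hW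
    obtain ⟨V₂, hV₂, hV₂V₁⟩ := exists_nhds_forall_mem hμ hdiag hV₁
    refine ⟨V₁ ∩ V₂, inter_mem hV₁ hV₂, ?_⟩
    rintro (_ | ⟨q, l⟩) hl c hc hq s
    · exact hV₁W [] K.zero_le c hc.1 (by simp) s
    · have hq' := hq q List.mem_cons_self
      exact hV₁W l (Nat.le_of_succ_le_succ hl) _ (hV₂V₁ c hc.2 q.1 hq'.2 _)
        (fun r hr => (hq r (List.mem_cons_of_mem _ hr)).1) _

theorem tendsto_nhdsSet_image (hμ : Continuous μ) {α : Type*} {l : Filter α} {c z : α → Z}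
    {t : α → unitInterval} {C : Set Z} {T : Set unitInterval} {z₀ : Z} (hC : IsCompact C)
    (hT : IsCompact T) (hc : Tendsto c l (𝓝ˢ C)) (hz : Tendsto z l (𝓝 z₀))
    (ht : Tendsto t l (𝓝ˢ T)) :
    Tendsto (fun w => μ (c w, z w, t w)) l (𝓝ˢ (μ '' (C ×ˢ {z₀} ×ˢ T))) := by
  rw [← nhdsSet_singleton] at hz
  have h := hc.prodMk (hz.prodMk ht)
  rw [← isCompact_singleton.nhdsSet_prod_eq hT,
    ← hC.nhdsSet_prod_eq (isCompact_singleton.prod hT)] at h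
  exact (hμ.tendsto_nhdsSet (mapsTo_image μ _)).comp h

section Continuity

variable {W : Type*} [TopologicalSpace W] {w₀ : W}

theorem continuousAt_combine_step (hμ : Continuous μ) (h1 : ∀ c z, μ (c, z, 1) = z)
    {c z : W → Z} {s a : W → ℝ} {C : Set Z} (hC : IsCompact C) (hcC : Tendsto c (𝓝 w₀) (𝓝ˢ C))
    (hc : 0 < s w₀ → ContinuousAt c w₀) (hz : ContinuousAt z w₀) (hs : ContinuousAt s w₀)
    (ha : ContinuousAt a w₀) (hs0 : 0 ≤ s w₀) (hsa : 0 < s w₀ + a w₀) :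
    ContinuousAt (fun w => μ (c w, z w, ratio (s w) (a w))) w₀ := by
  have ht := continuousAt_ratio hs ha hsa.ne'
  rcases hs0.lt_or_eq with hpos | hzero
  · exact hμ.continuousAt.comp ((hc hpos).prodMk (hz.prodMk ht))
  have ht1 : ratio (s w₀) (a w₀) = 1 := by
    rw [← hzero] at hsa ⊢
    exact ratio_zero_left (by linarith)
  have ht' : Tendsto (fun w => ratio (s w) (a w)) (𝓝 w₀) (𝓝ˢ {1}) := by
    rw [nhdsSet_singleton, ← ht1]
    exact ht
  have h := tendsto_nhdsSet_image hμ hC isCompact_singleton hcC hz ht'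
  refine h.mono_right ((nhdsSet_mono ?_).trans nhdsSet_singleton.le)
  rintro _ ⟨⟨b, b', t⟩, ⟨-, hb', htt⟩, rfl⟩
  simp only [mem_singleton_iff] at hb' htt ⊢
  rw [hb', htt, h1, ht1, h1]

theorem continuousAt_combine {ι : Type*} (hμ : Continuous μ) (h1 : ∀ c z, μ (c, z, 1) = z)
    (z : ι → W → Z) (a : ι → W → ℝ) (L : List ι) (hz : ∀ i ∈ L, ContinuousAt (z i) w₀)
    (ha : ∀ i ∈ L, ContinuousAt (a i) w₀) (ha0 : ∀ i ∈ L, 0 ≤ a i w₀) {c : W → Z} {s : W → ℝ}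
    {C : Set Z} (hC : IsCompact C) (hcC : Tendsto c (𝓝 w₀) (𝓝ˢ C))
    (hc : 0 < s w₀ → ContinuousAt c w₀) (hs : ContinuousAt s w₀) (hs0 : 0 ≤ s w₀)
    (hpos : 0 < s w₀ ∨ ∃ i ∈ L, 0 < a i w₀) :
    ContinuousAt (fun w => combine μ (c w) (s w) (L.map fun i => (z i w, a i w))) w₀ := by
  induction L generalizing c s C with
  | nil => exact hc (hpos.resolve_right (by simp))
  | cons i L ih =>
    have hai := ha0 i List.mem_cons_self
    simp only [List.map_cons, combine]
    refine ih (fun j hj => hz j (List.mem_cons_of_mem _ hj))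
      (fun j hj => ha j (List.mem_cons_of_mem _ hj))
      (fun j hj => ha0 j (List.mem_cons_of_mem _ hj))
      ((hC.prod (isCompact_singleton.prod isCompact_univ)).image hμ)
      (tendsto_nhdsSet_image hμ hC isCompact_univ hcC (hz i List.mem_cons_self)
        (by simp only [nhdsSet_univ, tendsto_top]))
      (fun hsa => continuousAt_combine_step hμ h1 hC hcC hc (hz i List.mem_cons_self) hs
        (ha i List.mem_cons_self) hs0 hsa)
      (hs.add (ha i List.mem_cons_self)) (add_nonneg hs0 hai) ?_
    rcases hpos with hpos | ⟨j, hj, hj'⟩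
    · exact Or.inl (by linarith)
    rcases List.mem_cons.1 hj with rfl | hj
    · exact Or.inl (by linarith)
    · exact Or.inr ⟨j, hj, hj'⟩

theorem continuous_combineSupport {ι : Type*} [LinearOrder ι] (z₀ : Z) (hμ : Continuous μ)
    (h0 : ∀ c z, μ (c, z, 0) = c) (h1 : ∀ c z, μ (c, z, 1) = z) (z : ι → W → Z)
    (a : ι → W → ℝ) (hz : ∀ i, Continuous (z i)) (ha : ∀ i, Continuous (a i))
    (ha0 : ∀ i w, 0 ≤ a i w) (hlf : LocallyFinite fun i => support (a i))
    (hne : ∀ w, ∃ i, a i w ≠ 0) :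
    Continuous fun w => combineSupport μ z₀ (z · w) (a · w) := by
  refine continuous_iff_continuousAt.2 fun w₀ => ?_
  obtain ⟨U, hU, hUfin⟩ := hlf w₀
  have hloc : ∀ w ∈ U, support (a · w) ⊆ hUfin.toFinset :=
    fun w hw i hi => hUfin.mem_toFinset.2 ⟨w, hi, hw⟩
  obtain ⟨i₀, hi₀⟩ := hne w₀
  have hcont : ContinuousAt (fun w => combineSort μ z₀ hUfin.toFinset (z · w) (a · w)) w₀ :=
    continuousAt_combine hμ h1 z a _ (fun i _ => (hz i).continuousAt)
      (fun i _ => (ha i).continuousAt) (fun i _ => ha0 i w₀) isCompact_singleton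
      (by rw [nhdsSet_singleton]; exact tendsto_const_nhds) (fun h => absurd h (lt_irrefl 0))
      continuousAt_const le_rfl
      (Or.inr ⟨i₀, (Finset.mem_sort _).2 (hloc w₀ (mem_of_mem_nhds hU) hi₀),
        (ha0 i₀ w₀).lt_of_ne' hi₀⟩)
  exact hcont.congr (eventually_of_mem hU fun w hw => (combineSupport_eq h0 _ (hloc w hw)).symm)

end Continuity

end Equiconnected

theorem IsEquiconnecting.continuous_unitInterval {Z : Type*} [TopologicalSpace Z]
    {lam : Z → Z → ℝ → Z} (hlam : IsEquiconnecting lam) :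
    Continuous fun q : Z × Z × unitInterval => lam q.1 q.2.1 q.2.2 := by
  have hf : Continuous fun q : Z × Z × unitInterval => ((q.1, q.2.1, q.2.2) : Z × Z × ℝ) := by
    fun_prop
  exact hlam.continuousOn.comp_continuous hf fun q => ⟨mem_univ _, mem_univ _, q.2.2.2⟩

namespace IsLocFinPartitionOfUnity

variable {I X : Type*} [TopologicalSpace X] {φ : I → X → ℝ}

theorem locallyFinite_support (hφ : IsLocFinPartitionOfUnity φ) :
    LocallyFinite fun i => support (φ i) :=
  hφ.2.2.1.subset fun _ => subset_closure

theorem exists_ne_zero (hφ : IsLocFinPartitionOfUnity φ) (x : X) : ∃ i, φ i x ≠ 0 := by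
  by_contra! h
  simpa [finsum_eq_zero_of_forall_eq_zero h] using hφ.2.2.2 x

end IsLocFinPartitionOfUnity

/-- Let `(Z, λ)` be an equiconnected space and `f : X × Y → Z` continuous in
the first variable.  Suppose there are a sequence of locally finite partitions of unity
`(φ_{i,n})_{i ∈ I_n}` on `X` and families of points `p_{i,n} ∈ X` such that (a) the sections
`y ↦ f(p_{i,n}, y)` are continuous, (b) condition (3) of the paper holds, and (c) the
sequence of families of supports is uniformly pointwise finite.  Then `f` is a pointwise
limit of a sequence of continuous maps. -/
theorem baireOne_of_uniformly_pointwise_finite {X Y Z : Type*} [TopologicalSpace X]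
    [TopologicalSpace Y] [TopologicalSpace Z]
    (lam : Z → Z → ℝ → Z) (hlam : IsEquiconnecting lam)
    (f : X × Y → Z) (hsep : ∀ y : Y, Continuous fun x => f (x, y))
    (I : ℕ → Type u) (φ : ∀ n, I n → X → ℝ) (p : ∀ n, I n → X)
    (hpart : ∀ n, IsLocFinPartitionOfUnity (φ n))
    (hsect : ∀ (n) (i : I n), Continuous fun y => f (p n i, y))
    (happrox : ∀ x : X, ∀ U ∈ nhds x, ∃ n₀ : ℕ, ∀ n ≥ n₀, ∀ i : I n,
      x ∈ closure (Function.support (φ n i)) → p n i ∈ U)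
    (hupf : ∀ x : X, ∃ K : ℕ, ∀ n : ℕ, ∃ s : Finset (I n), s.card ≤ K ∧
      ∀ i : I n, x ∈ closure (Function.support (φ n i)) → i ∈ s) :
    ∃ g : ℕ → X × Y → Z, (∀ n, Continuous (g n)) ∧
      ∀ q : X × Y, Filter.Tendsto (fun n => g n q) Filter.atTop (nhds (f q)) := by
  rcases isEmpty_or_nonempty (X × Y) with hXY | hXY
  · exact ⟨fun _ => f, fun _ => continuous_iff_continuousAt.2 isEmptyElim, isEmptyElim⟩
  obtain ⟨q₀⟩ := hXY
  let : ∀ n, LinearOrder (I n) := fun _ => IsWellOrder.linearOrder WellOrderingRel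
  set μ := fun q : Z × Z × unitInterval => lam q.1 q.2.1 q.2.2
  have hμ : Continuous μ := hlam.continuous_unitInterval
  have h0 : ∀ c z, μ (c, z, 0) = c := fun c z => hlam.map_zero c z
  have h1 : ∀ c z, μ (c, z, 1) = z := fun c z => hlam.map_one c z
  have hdiag : ∀ z t, μ (z, z, t) = z := fun z t => hlam.map_diag z t t.2
  refine ⟨fun n q => Equiconnected.combineSupport μ (f q₀) (fun i => f (p n i, q.2))
    (fun i => φ n i q.1), fun n => ?_, fun ⟨x, y⟩ => ?_⟩
  · exact Equiconnected.continuous_combineSupport (f q₀) hμ h0 h1 _ _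
      (fun i => (hsect n i).comp continuous_snd) (fun i => ((hpart n).1 i).comp continuous_fst)
      (fun i q => ((hpart n).2.1 i q.1).1)
      ((hpart n).locallyFinite_support.preimage_continuous continuous_fst)
      (fun q => (hpart n).exists_ne_zero q.1)
  rw [tendsto_def]
  intro W hW
  obtain ⟨K, hK⟩ := hupf x
  obtain ⟨V, hV, hVW⟩ := Equiconnected.exists_nhds_combine_mem hμ hdiag hW K
  obtain ⟨n₀, hn₀⟩ := happrox x _ ((hsep y).continuousAt.preimage_mem_nhds hV)
  filter_upwards [eventually_ge_atTop n₀] with n hn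
  obtain ⟨s, hsK, hs⟩ := hK n
  exact Equiconnected.combineSupport_mem h0 h1 hVW (fun i hi => hs i (subset_closure hi))
    hsK ((hpart n).exists_ne_zero x) fun i hi => hn₀ n hn i (subset_closure hi)
end

section
/- Let X and Y be topological spaces, (Z, γ, z*) a contractible space, (g_i)_{i∈I} a family of continuous maps g_i : Y → Z, and (φ_i)_{i∈I} a family of continuous functions φ_i : X → [0,1] such that the family of supports (supp φ_i)_{i∈I} is discrete in X. Then the mapping f : X × Y → Z defined by f(x,y) = γ(g_i(y), 1 − φ_i(x)) if x ∈ supp φ_i for some i ∈ I, and f(x,y) = z* otherwise, is continuous. -/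
open Set Function Filter Topology

universe u

/-- Let `(Z, γ, z₀)` be a contractible space, `(g_i)` a family of continuous
maps `Y → Z` and `(φ_i)` a family of continuous `[0,1]`-valued functions on `X` whose
supports form a discrete family.  Then the map `f` with `f(x,y) = γ(g_i(y), 1 - φ_i(x))` if
`x ∈ supp φ_i` and `f(x,y) = z₀` otherwise, is continuous. -/
theorem continuous_contractible_glue {X Y Z I : Type*} [TopologicalSpace X]
    [TopologicalSpace Y] [TopologicalSpace Z]
    (γ : Z → ℝ → Z) (z₀ : Z) (hγ : IsContracting γ z₀)
    (g : I → Y → Z) (hg : ∀ i, Continuous (g i))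
    (φ : I → X → ℝ) (hφc : ∀ i, Continuous (φ i)) (hφ01 : ∀ i x, φ i x ∈ Set.Icc (0 : ℝ) 1)
    (hdisc : IsDiscreteFamily fun i => closure (Function.support (φ i)))
    (f : X × Y → Z)
    (hf₁ : ∀ (x : X) (y : Y) (i : I),
      x ∈ closure (Function.support (φ i)) → f (x, y) = γ (g i y) (1 - φ i x))
    (hf₂ : ∀ (x : X) (y : Y),
      (∀ i : I, x ∉ closure (Function.support (φ i))) → f (x, y) = z₀) :
    Continuous f := by
  rw [continuous_iff_continuousAt]
  rintro ⟨x, y⟩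
  obtain ⟨U, hU, hS⟩ := hdisc x
  obtain ⟨V, hVU, hVopen, hxV⟩ := mem_nhds_iff.mp hU
  by_cases hx : ∃ i, x ∈ closure (Function.support (φ i))
  · obtain ⟨i0, hi0⟩ := hx
    have hcont : Continuous fun p : X × Y => γ (g i0 p.2) (1 - φ i0 p.1) := by
      have hgc : Continuous fun p : X × Y => (g i0 p.2, 1 - φ i0 p.1) :=
        ((hg i0).comp continuous_snd).prodMk
          (continuous_const.sub ((hφc i0).comp continuous_fst))
      exact hγ.continuousOn.comp_continuous hgc fun p =>
        ⟨trivial, by have h1 := (hφ01 i0 p.1).1; have h2 := (hφ01 i0 p.1).2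
                     constructor <;> simp <;> linarith⟩
    apply hcont.continuousAt.congr
    filter_upwards [prod_mem_nhds (hVopen.mem_nhds hxV) univ_mem] with p hp
    by_cases hp1 : p.1 ∈ closure (Function.support (φ i0))
    · exact (hf₁ p.1 p.2 i0 hp1).symm
    · have hz : ∀ i, p.1 ∉ closure (Function.support (φ i)) := by
        intro i hi
        have hiS : (U ∩ closure (Function.support (φ i))).Nonempty :=
          ⟨p.1, hVU hp.1, hi⟩
        have hi0S : (U ∩ closure (Function.support (φ i0))).Nonempty :=
          ⟨x, hVU hxV, hi0⟩
        exact hp1 ((hS hiS hi0S) ▸ hi)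
      have hφ0 : φ i0 p.1 = 0 := by
        by_contra h
        exact hp1 (subset_closure (by simpa [Function.mem_support] using h))
      have : f (p.1, p.2) = z₀ := hf₂ p.1 p.2 hz
      simp only [hφ0, sub_zero]
      rw [hγ.map_one]
      exact this.symm
  · push_neg at hx
    by_cases hne : ∃ i1, (U ∩ closure (Function.support (φ i1))).Nonempty
    · obtain ⟨i1, hi1⟩ := hne
      have hW : V ∩ (closure (Function.support (φ i1)))ᶜ ∈ nhds x :=
        (hVopen.inter isClosed_closure.isOpen_compl).mem_nhds ⟨hxV, hx i1⟩
      apply continuousAt_const.congr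
      filter_upwards [prod_mem_nhds hW univ_mem] with p hp
      refine (hf₂ p.1 p.2 ?_).symm
      intro i hi
      have hiS : (U ∩ closure (Function.support (φ i))).Nonempty := ⟨p.1, hVU hp.1.1, hi⟩
      exact hp.1.2 ((hS hiS hi1) ▸ hi)
    · push_neg at hne
      apply continuousAt_const.congr
      filter_upwards [prod_mem_nhds (hVopen.mem_nhds hxV) univ_mem] with p hp
      refine (hf₂ p.1 p.2 ?_).symm
      intro i hi
      exact absurd (hne i) (Set.nonempty_iff_ne_empty.mp ⟨p.1, hVU hp.1, hi⟩)
end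

section
/- Let X and Y be topological spaces, (Z, γ, z*) a contractible space, (g_i)_{i∈I} a family of Baire-one maps g_i : Y → Z, and (φ_i)_{i∈I} a family of continuous functions φ_i : X → [0,1] such that the family of supports (supp φ_i)_{i∈I} is discrete in X. Then the mapping f : X × Y → Z defined by f(x,y) = γ(g_i(y), 1 − φ_i(x)) if x ∈ supp φ_i for some i ∈ I, and f(x,y) = z* otherwise, is Baire-one. -/
open Set Function Filter Topology

universe u

/-
The approximants glue, over the discrete family of supports, the continuous maps
`(x, y) ↦ γ (h_{i,n} y) (1 - φ_i x)` built from approximants `h_{i,n} → g_i`. Off `supp φ_i`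
each of these maps equals `γ (h_{i,n} y) 1 = z₀`, so by discreteness the glued map is locally
a single one of them or the constant `z₀`, hence continuous. At a fixed point the glued map
always uses the same piece, so the approximants converge pointwise to `f` by continuity of `γ`.
-/

section DiscreteGlue

variable {X Z I : Type*}

theorem IsDiscreteFamily.eq_of_mem [TopologicalSpace X] {A : I → Set X}
    (hA : IsDiscreteFamily A) {x : X} {i j : I} (hi : x ∈ A i) (hj : x ∈ A j) : i = j := by
  obtain ⟨U, hU, hsub⟩ := hA x
  exact hsub ⟨x, mem_of_mem_nhds hU, hi⟩ ⟨x, mem_of_mem_nhds hU, hj⟩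

theorem IsDiscreteFamily.preimage [TopologicalSpace X] {P : Type*} [TopologicalSpace P]
    {A : I → Set X} (hA : IsDiscreteFamily A) {π : P → X} (hπ : Continuous π) :
    IsDiscreteFamily fun i => π ⁻¹' A i := by
  intro p
  obtain ⟨U, hU, hsub⟩ := hA (π p)
  exact ⟨π ⁻¹' U, hπ.continuousAt hU, hsub.anti fun _ ⟨q, hq⟩ => ⟨π q, hq⟩⟩

open Classical in
/-- Where several `A i` overlap the piece is chosen arbitrarily; a discrete family has no
overlaps. -/
noncomputable def discreteGlue (A : I → Set X) (F : I → X → Z) (c : Z) (x : X) : Z :=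
  if h : ∃ i, x ∈ A i then F h.choose x else c

variable {A : I → Set X} {F : I → X → Z} {c : Z}

theorem discreteGlue_eq_of_mem [TopologicalSpace X] (hA : IsDiscreteFamily A) {x : X} {i : I}
    (hx : x ∈ A i) :
    discreteGlue A F c x = F i x := by
  have h : ∃ i, x ∈ A i := ⟨i, hx⟩
  rw [discreteGlue, dif_pos h, hA.eq_of_mem h.choose_spec hx]

theorem discreteGlue_eq_of_forall_notMem {x : X} (hx : ∀ i, x ∉ A i) :
    discreteGlue A F c x = c := by
  rw [discreteGlue, dif_neg (not_exists.2 hx)]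

theorem continuous_discreteGlue [TopologicalSpace X] [TopologicalSpace Z]
    (hA : IsDiscreteFamily A) (hF : ∀ i, Continuous (F i)) (hc : ∀ i x, x ∉ A i → F i x = c) :
    Continuous (discreteGlue A F c) := by
  refine continuous_iff_continuousAt.2 fun x => ?_
  obtain ⟨U, hU, hsub⟩ := hA x
  by_cases hmeet : ∃ j, (U ∩ A j).Nonempty
  · obtain ⟨j, hj⟩ := hmeet
    refine (hF j).continuousAt.congr (eventually_of_mem hU fun p hp => ?_)
    by_cases hp' : ∃ i, p ∈ A i
    · obtain ⟨i, hi⟩ := hp'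
      rw [discreteGlue_eq_of_mem hA hi, hsub ⟨p, hp, hi⟩ hj]
    · rw [not_exists] at hp'
      rw [discreteGlue_eq_of_forall_notMem hp', hc j p (hp' j)]
  · refine (continuousAt_const (y := c)).congr (eventually_of_mem hU fun p hp => ?_)
    exact (discreteGlue_eq_of_forall_notMem fun i hi => hmeet ⟨i, p, hp, hi⟩).symm

theorem tendsto_discreteGlue [TopologicalSpace Z] {α : Type*} {l : Filter α}
    {Fₙ : α → I → X → Z} (h : ∀ i x, Tendsto (fun a => Fₙ a i x) l (𝓝 (F i x))) (x : X) :
    Tendsto (fun a => discreteGlue A (Fₙ a) c x) l (𝓝 (discreteGlue A F c x)) := by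
  unfold discreteGlue
  split_ifs
  exacts [h _ x, tendsto_const_nhds]

end DiscreteGlue

section Contracting

variable {Z : Type*} [TopologicalSpace Z] {γ : Z → ℝ → Z} {z₀ : Z}

theorem IsContracting.tendsto_comp (hγ : IsContracting γ z₀) {α : Type*} {l : Filter α}
    {u : α → Z} {t : α → ℝ} {z : Z} {s : ℝ} (hu : Tendsto u l (𝓝 z)) (ht : Tendsto t l (𝓝 s))
    (hts : ∀ a, t a ∈ Icc 0 1) (hs : s ∈ Icc 0 1) :
    Tendsto (fun a => γ (u a) (t a)) l (𝓝 (γ z s)) :=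
  (hγ.continuousOn (z, s) ⟨trivial, hs⟩).tendsto.comp <| tendsto_nhdsWithin_iff.2
    ⟨hu.prodMk_nhds ht, Eventually.of_forall fun a => ⟨trivial, hts a⟩⟩

theorem IsContracting.continuous_comp (hγ : IsContracting γ z₀) {Y : Type*}
    [TopologicalSpace Y] {u : Y → Z} {t : Y → ℝ} (hu : Continuous u) (ht : Continuous t)
    (hts : ∀ y, t y ∈ Icc 0 1) : Continuous fun y => γ (u y) (t y) :=
  continuous_iff_continuousAt.2 fun y =>
    hγ.tendsto_comp hu.continuousAt ht.continuousAt hts (hts y)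

end Contracting

/-- Let `(Z, γ, z₀)` be a contractible space, `(g_i)` a family of Baire-one
maps `Y → Z` and `(φ_i)` a family of continuous `[0,1]`-valued functions on `X` whose
supports form a discrete family.  Then the map `f` with `f(x,y) = γ(g_i(y), 1 - φ_i(x))` if
`x ∈ supp φ_i` and `f(x,y) = z₀` otherwise, is Baire-one. -/
theorem baireOne_contractible_glue {X Y Z I : Type*} [TopologicalSpace X]
    [TopologicalSpace Y] [TopologicalSpace Z]
    (γ : Z → ℝ → Z) (z₀ : Z) (hγ : IsContracting γ z₀)
    (g : I → Y → Z) (hg : ∀ i, BaireOne (g i))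
    (φ : I → X → ℝ) (hφc : ∀ i, Continuous (φ i)) (hφ01 : ∀ i x, φ i x ∈ Set.Icc (0 : ℝ) 1)
    (hdisc : IsDiscreteFamily fun i => closure (Function.support (φ i)))
    (f : X × Y → Z)
    (hf₁ : ∀ (x : X) (y : Y) (i : I),
      x ∈ closure (Function.support (φ i)) → f (x, y) = γ (g i y) (1 - φ i x))
    (hf₂ : ∀ (x : X) (y : Y),
      (∀ i : I, x ∉ closure (Function.support (φ i))) → f (x, y) = z₀) :
    BaireOne f := by
  choose G hG hGg using hg
  set A : I → Set (X × Y) := fun i => Prod.fst ⁻¹' closure (support (φ i))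
  have hA : IsDiscreteFamily A := hdisc.preimage continuous_fst
  have hφ' : ∀ i x, 1 - φ i x ∈ Icc (0 : ℝ) 1 := fun i x =>
    Icc.mem_iff_one_sub_mem.1 (hφ01 i x)
  have hf : f = discreteGlue A (fun i p => γ (g i p.2) (1 - φ i p.1)) z₀ := by
    funext ⟨x, y⟩
    by_cases hx : ∃ i, x ∈ closure (support (φ i))
    · obtain ⟨i, hi⟩ := hx
      rw [hf₁ x y i hi, discreteGlue_eq_of_mem hA (show (x, y) ∈ A i from hi)]
    · rw [not_exists] at hx
      rw [hf₂ x y hx, discreteGlue_eq_of_forall_notMem (A := A) hx]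
  refine ⟨fun n => discreteGlue A (fun i p => γ (G i n p.2) (1 - φ i p.1)) z₀,
    fun n => continuous_discreteGlue hA (fun i => ?_) (fun i p hp => ?_), ?_⟩
  · exact hγ.continuous_comp ((hG i n).comp continuous_snd)
      (continuous_const.sub ((hφc i).comp continuous_fst)) (fun p => hφ' i p.1)
  · rw [notMem_support.1 fun hne => hp (subset_closure hne), sub_zero, hγ.map_one]
  · rw [hf]
    exact tendsto_discreteGlue fun i p =>
      hγ.tendsto_comp (hGg i p.2) tendsto_const_nhds (fun _ => hφ' i p.1) (hφ' i p.1)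
end

section
/- Let X be a topological space and 𝒢 a locally finite cover of X by cozero sets. Then there exists a disjoint locally finite cover of X by functionally ambiguous sets which refines 𝒢 (i.e. a pairwise disjoint, locally finite family of functionally ambiguous sets covering X, each member of which is contained in some member of 𝒢). -/
open Set Function Filter Topology

universe u

/-! Well-order the index set and put `A i = G i \ ⋃ j < i, G j`. These sets are pairwise
disjoint, cover `X` because every point lies in a least `G i`, and are locally finite because
`A i ⊆ G i`. A locally finite union of cozero sets `{f_j > 0}` is the cozero set of `∑ᶠ j, f_j`,
so each `A i` is a difference of two cozero sets; such a difference is functionally ambiguous,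
since a cozero set `{f > 0} = ⋃ₙ {f ≥ 1/(n+1)}` is a countable union of zero sets and its
complement, a zero set `{g = 0} = ⋂ₙ {g < 1/(n+1)}`, is a countable intersection of cozero
sets. -/

section ZeroSets

variable {X : Type*} [TopologicalSpace X] {A B : Set X} {f g : X → ℝ}

theorem isZeroSet_preimage_zero (hg : Continuous g) : IsZeroSet (g ⁻¹' {0}) := by
  refine ⟨fun x => min |g x| 1, (continuous_abs.comp hg).min continuous_const,
    fun x => ⟨le_min (abs_nonneg _) zero_le_one, min_le_right _ _⟩, ?_⟩
  ext x
  simp +contextual [min_eq_iff]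

theorem isCozeroSet_support (hg : Continuous g) : IsCozeroSet (support g) := by
  refine ⟨fun x => min |g x| 1, (continuous_abs.comp hg).min continuous_const,
    fun x => ⟨le_min (abs_nonneg _) zero_le_one, min_le_right _ _⟩, ?_⟩
  ext x
  simp

theorem IsCozeroSet.exists_nonneg_eq_support (hA : IsCozeroSet A) :
    ∃ g : X → ℝ, Continuous g ∧ 0 ≤ g ∧ A = support g := by
  obtain ⟨g, hg, hg01, rfl⟩ := hA
  refine ⟨g, hg, fun x => (hg01 x).1, ?_⟩
  ext x
  simp [(hg01 x).2, (hg01 x).1.lt_iff_ne, eq_comm]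

theorem isZeroSet_setOf_le (hf : Continuous f) (hg : Continuous g) :
    IsZeroSet {x | f x ≤ g x} := by
  convert isZeroSet_preimage_zero ((hf.sub hg).max continuous_zero) using 1
  ext x
  simp

theorem isCozeroSet_setOf_lt (hf : Continuous f) (hg : Continuous g) :
    IsCozeroSet {x | f x < g x} := by
  convert isCozeroSet_support ((hg.sub hf).max continuous_zero) using 1
  ext x
  simp

theorem IsZeroSet.inter (hA : IsZeroSet A) (hB : IsZeroSet B) : IsZeroSet (A ∩ B) := by
  obtain ⟨f, hf, hf01, rfl⟩ := hA
  obtain ⟨g, hg, hg01, rfl⟩ := hB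
  convert isZeroSet_preimage_zero (hf.add hg) using 1
  ext x
  simp [add_eq_zero_iff_of_nonneg (hf01 x).1 (hg01 x).1]

theorem IsCozeroSet.inter (hA : IsCozeroSet A) (hB : IsCozeroSet B) : IsCozeroSet (A ∩ B) := by
  obtain ⟨f, hf, -, rfl⟩ := hA.exists_nonneg_eq_support
  obtain ⟨g, hg, -, rfl⟩ := hB.exists_nonneg_eq_support
  rw [← support_mul]
  exact isCozeroSet_support (hf.mul hg)

theorem IsCozeroSet.isZeroSet_compl (hA : IsCozeroSet A) : IsZeroSet Aᶜ := by
  obtain ⟨g, hg, -, rfl⟩ := hA.exists_nonneg_eq_support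
  rw [compl_support]
  exact isZeroSet_preimage_zero hg

theorem IsCozeroSet.exists_eq_iUnion_isZeroSet (hA : IsCozeroSet A) :
    ∃ F : ℕ → Set X, (∀ n, IsZeroSet (F n)) ∧ A = ⋃ n, F n := by
  obtain ⟨g, hg, hg0, rfl⟩ := hA.exists_nonneg_eq_support
  refine ⟨fun n => {x | 1 / (n + 1 : ℝ) ≤ g x},
    fun n => isZeroSet_setOf_le continuous_const hg, ?_⟩
  ext x
  simp only [mem_support, mem_iUnion, mem_ofPred_eq]
  constructor
  · intro hx
    obtain ⟨n, hn⟩ := exists_nat_one_div_lt ((hg0 x).lt_of_ne' hx)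
    exact ⟨n, hn.le⟩
  · rintro ⟨n, hn⟩
    exact (Nat.one_div_pos_of_nat.trans_le hn).ne'

theorem IsZeroSet.exists_eq_iInter_isCozeroSet (hA : IsZeroSet A) :
    ∃ C : ℕ → Set X, (∀ n, IsCozeroSet (C n)) ∧ A = ⋂ n, C n := by
  obtain ⟨g, hg, hg01, rfl⟩ := hA
  refine ⟨fun n => {x | g x < 1 / (n + 1 : ℝ)},
    fun n => isCozeroSet_setOf_lt hg continuous_const, ?_⟩
  ext x
  simp only [mem_preimage, mem_singleton_iff, mem_iInter, mem_ofPred_eq]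
  constructor
  · rintro hx n
    exact hx ▸ Nat.one_div_pos_of_nat
  · intro hx
    by_contra hne
    obtain ⟨n, hn⟩ := exists_nat_one_div_lt ((hg01 x).1.lt_of_ne' hne)
    exact (hx n).not_gt hn

theorem IsCozeroSet.isFunctionallyAmbiguous_diff (hA : IsCozeroSet A) (hB : IsCozeroSet B) :
    IsFunctionallyAmbiguous (A \ B) := by
  obtain ⟨F, hF, hAF⟩ := hA.exists_eq_iUnion_isZeroSet
  obtain ⟨C, hC, hBC⟩ := hB.isZeroSet_compl.exists_eq_iInter_isCozeroSet
  refine ⟨⟨fun n => F n ∩ Bᶜ, fun n => (hF n).inter hB.isZeroSet_compl, ?_⟩,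
    ⟨fun n => A ∩ C n, fun n => hA.inter (hC n), ?_⟩⟩
  · rw [sdiff_eq, hAF, iUnion_inter]
  · rw [sdiff_eq, hBC, inter_iInter]

theorem LocallyFinite.isCozeroSet_iUnion {ι : Type*} {G : ι → Set X} (hlf : LocallyFinite G)
    (hG : ∀ i, IsCozeroSet (G i)) : IsCozeroSet (⋃ i, G i) := by
  choose g hg hg0 hGg using fun i => (hG i).exists_nonneg_eq_support
  obtain rfl : G = fun i => support (g i) := funext hGg
  convert isCozeroSet_support (continuous_finsum hg hlf) using 1
  ext x
  simp only [mem_iUnion, mem_support]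
  constructor
  · rintro ⟨i, hi⟩
    exact (finsum_pos (fun j => hg0 j x) ⟨i, (hg0 i x).lt_of_ne' hi⟩
      (hlf.point_finite x)).ne'
  · intro hx
    by_contra! h
    exact hx (finsum_eq_zero_of_forall_eq_zero h)

end ZeroSets

section TransfiniteDisjointed

variable {α ι : Type*} [LinearOrder ι] (G : ι → Set α)

def transfiniteDisjointed (i : ι) : Set α :=
  G i \ ⋃ j < i, G j

theorem transfiniteDisjointed_subset (i : ι) : transfiniteDisjointed G i ⊆ G i :=
  sdiff_subset

theorem disjoint_transfiniteDisjointed :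
    Pairwise (Disjoint on transfiniteDisjointed G) :=
  (pairwise_disjoint_on _).2 fun _ _ hij =>
    disjoint_left.2 fun _ hxi hxj => hxj.2 (mem_biUnion hij hxi.1)

theorem iUnion_transfiniteDisjointed [WellFoundedLT ι] :
    ⋃ i, transfiniteDisjointed G i = ⋃ i, G i := by
  refine (iUnion_mono (transfiniteDisjointed_subset G)).antisymm fun x hx => ?_
  obtain ⟨i, hi, hmin⟩ := wellFounded_lt.has_min {i | x ∈ G i} (mem_iUnion.1 hx)
  exact mem_iUnion.2 ⟨i, hi, by simpa using fun j hj hxj => hmin j hxj hj⟩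

end TransfiniteDisjointed

/-- Every locally finite cover of a topological space by cozero sets admits a
disjoint locally finite refinement by functionally ambiguous sets which still covers. -/
theorem exists_disjoint_ambiguous_refinement {X I : Type*} [TopologicalSpace X]
    (G : I → Set X) (hcover : ⋃ i, G i = Set.univ) (hlf : LocallyFinite G)
    (hcz : ∀ i, IsCozeroSet (G i)) :
    ∃ A : I → Set X, (⋃ i, A i = Set.univ) ∧ Pairwise (Function.onFun Disjoint A) ∧
      LocallyFinite A ∧ (∀ i, IsFunctionallyAmbiguous (A i)) ∧ ∀ i, ∃ j, A i ⊆ G j := by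
  obtain ⟨_, _⟩ := exists_wellFoundedLT I
  have hbelow (i : I) : IsCozeroSet (⋃ j < i, G j) := by
    simpa only [iUnion_subtype, comp_apply] using
      (hlf.comp_injective Subtype.val_injective).isCozeroSet_iUnion fun j : {j // j < i} => hcz j
  refine ⟨transfiniteDisjointed G, (iUnion_transfiniteDisjointed G).trans hcover,
    disjoint_transfiniteDisjointed G,
    hlf.subset (transfiniteDisjointed_subset G),
    fun i => (hcz i).isFunctionallyAmbiguous_diff (hbelow i),
    fun i => ⟨i, transfiniteDisjointed_subset G i⟩⟩
end

section
/- Let X be a topological space, a ∈ ℝ, let F and H be zero sets in X and G a cozero set in X such that H ⊆ F ∩ G. Then there exists a function f : X × ℝ → ℝ with the following properties: (1) x ↦ f(x,y) is continuous for every y ∈ ℝ; (2) f is jointly continuous at every point of (X \ F) × ℝ; (3) f(x,y) = 0 whenever (x,y) ∈ (X \ G) × ℝ or (x,y) ∈ F × (ℝ \ {a}); (4) f(x,a) = 1 for every x ∈ H. -/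
open Set Function Filter Topology

universe u

/-- Let `a ∈ ℝ`, `F, H` zero sets and `G` a cozero set in `X` with
`H ⊆ F ∩ G`.  Then there is `f : X × ℝ → ℝ` which is continuous in the first variable,
jointly continuous at every point of `(X \ F) × ℝ`, vanishes on `(X \ G) × ℝ` and on
`F × (ℝ \ {a})`, and equals `1` on `H × {a}`. -/
theorem exists_peak_function {X : Type*} [TopologicalSpace X] (a : ℝ) (F H G : Set X)
    (hF : IsZeroSet F) (hH : IsZeroSet H) (hG : IsCozeroSet G) (hsub : H ⊆ F ∩ G) :
    ∃ f : X × ℝ → ℝ,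
      (∀ y : ℝ, Continuous fun x => f (x, y)) ∧
      (∀ x ∉ F, ∀ y : ℝ, ContinuousAt f (x, y)) ∧
      (∀ (x : X) (y : ℝ), x ∉ G → f (x, y) = 0) ∧
      (∀ x ∈ F, ∀ y : ℝ, y ≠ a → f (x, y) = 0) ∧
      ∀ x ∈ H, f (x, a) = 1 := by
  obtain ⟨φ, hφc, hφmem, hφF⟩ := hF
  obtain ⟨h, hhc, hhmem, hhH⟩ := hH
  obtain ⟨g, hgc, hgmem, hgG⟩ := hG
  have hden : ∀ x, 0 < g x + h x := by
    intro x
    rcases eq_or_lt_of_le (hhmem x).1 with he | hl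
    · have hxH : x ∈ H := by rw [hhH]; exact he.symm
      have hxG : x ∈ G := (hsub hxH).2
      rw [hgG] at hxG
      have : 0 < g x := hxG.1
      linarith [(hhmem x).1]
    · linarith [(hgmem x).1]
  set s : X → ℝ := fun x => g x / (g x + h x) with hs
  have hsc : Continuous s := hgc.div (hgc.add hhc) fun x => (hden x).ne'
  have hsH : ∀ x ∈ H, s x = 1 := by
    intro x hx
    have hx0 : h x = 0 := by rw [hhH] at hx; exact hx
    have hg0 : g x ≠ 0 := by have := hden x; rw [hx0] at this; linarith
    simp [hs, hx0, hg0]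
  have hsG : ∀ x, x ∉ G → s x = 0 := by
    intro x hx
    have hg0 : g x = 0 := by
      rw [hgG] at hx
      rcases lt_or_eq_of_le (hgmem x).1 with hl | he
      · exact absurd ⟨hl, (hgmem x).2⟩ hx
      · exact he.symm
    simp [hs, hg0]
  refine ⟨fun p => if φ p.1 = 0 then (if p.2 = a then s p.1 else 0)
      else s p.1 * max 0 (1 - |p.2 - a| / φ p.1), ?_, ?_, ?_, ?_, ?_⟩
  · -- continuity in the first variable
    intro y
    by_cases hy : y = a
    · subst hy
      have : (fun x => if φ x = 0 then (if y = y then s x else 0)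
          else s x * max 0 (1 - |y - y| / φ x)) = s := by
        funext x
        by_cases hx : φ x = 0 <;> simp [hx]
      rw [this]; exact hsc
    · rw [continuous_iff_continuousAt]
      intro x0
      by_cases hx0 : φ x0 = 0
      · -- locally zero near x0
        have hya : 0 < |y - a| := abs_pos.mpr (sub_ne_zero.mpr hy)
        have hU : IsOpen {x : X | φ x < |y - a|} :=
          isOpen_lt hφc continuous_const
        have hmem : x0 ∈ {x : X | φ x < |y - a|} := by
          simp only [Set.mem_setOf_eq, hx0]; exact hya
        have hev : ∀ᶠ x in nhds x0, φ x < |y - a| :=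
          hU.eventually_mem hmem
        have heq : (fun x => if φ x = 0 then (if y = a then s x else 0)
            else s x * max 0 (1 - |y - a| / φ x)) =ᶠ[nhds x0] fun _ => 0 := by
          refine hev.mono fun x hx => ?_
          by_cases hφx : φ x = 0
          · simp [hφx, hy]
          · have hpos : 0 < φ x := lt_of_le_of_ne (hφmem x).1 (Ne.symm hφx)
            have h1 : 1 - |y - a| / φ x ≤ 0 := by
              have : 1 ≤ |y - a| / φ x := (one_le_div hpos).mpr hx.le
              linarith
            simp [hφx, max_eq_left h1]
        exact ContinuousAt.congr continuousAt_const heq.symm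
      · -- φ x0 ≠ 0 : the formula is continuous here
        have hU : IsOpen {x : X | φ x ≠ 0} :=
          isOpen_ne_fun hφc continuous_const
        have hev : ∀ᶠ x in nhds x0, φ x ≠ 0 := hU.eventually_mem hx0
        have heq : (fun x => if φ x = 0 then (if y = a then s x else 0)
            else s x * max 0 (1 - |y - a| / φ x)) =ᶠ[nhds x0]
            fun x => s x * max 0 (1 - |y - a| / φ x) := by
          refine hev.mono fun x hx => ?_
          simp [hx]
        refine ContinuousAt.congr ?_ heq.symm
        exact hsc.continuousAt.mul (continuousAt_const.max
          (continuousAt_const.sub (ContinuousAt.div continuousAt_const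
            hφc.continuousAt hx0)))
  · -- joint continuity away from F
    intro x0 hx0F y
    have hx0 : φ x0 ≠ 0 := by
      intro hc
      exact hx0F (by rw [hφF]; exact hc)
    have hU : IsOpen {p : X × ℝ | φ p.1 ≠ 0} :=
      isOpen_ne_fun (hφc.comp continuous_fst) continuous_const
    have hev : ∀ᶠ p : X × ℝ in nhds (x0, y), φ p.1 ≠ 0 := hU.eventually_mem hx0
    have heq : (fun p : X × ℝ => if φ p.1 = 0 then (if p.2 = a then s p.1 else 0)
        else s p.1 * max 0 (1 - |p.2 - a| / φ p.1)) =ᶠ[nhds (x0, y)]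
        fun p => s p.1 * max 0 (1 - |p.2 - a| / φ p.1) := by
      refine hev.mono fun p hp => ?_
      simp [hp]
    refine ContinuousAt.congr ?_ heq.symm
    exact (hsc.comp continuous_fst).continuousAt.mul (continuousAt_const.max
      (continuousAt_const.sub (ContinuousAt.div
        ((continuous_snd.sub continuous_const).abs.continuousAt)
        (hφc.comp continuous_fst).continuousAt hx0)))
  · -- vanishing outside G
    intro x y hx
    have := hsG x hx
    by_cases hφx : φ x = 0 <;> simp [hφx, this]
  · -- vanishing on F × (ℝ \ {a})
    intro x hx y hy
    have hφx : φ x = 0 := by rw [hφF] at hx; exact hx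
    simp [hφx, hy]
  · -- equals 1 on H × {a}
    intro x hx
    have hφx : φ x = 0 := by
      have := (hsub hx).1
      rw [hφF] at this; exact this
    simp [hφx, hsH x hx]
end

section
/- Let Y and Z be topological spaces such that there exists a map g : Y → Z which is the pointwise limit of a sequence of Baire-one maps Y → Z but is not itself Baire-one. Then there exist a countable Hausdorff topological space X and a mapping f : X × Y → Z such that: (a) x ↦ f(x,y) is continuous for every y ∈ Y; (b) the set {x ∈ X : the map y ↦ f(x,y) is continuous} is dense in X; yet (c) f is not the pointwise limit of any sequence of separately continuous mappings f_n : X × Y → Z (separately continuous meaning continuous in each variable when the other is fixed). -/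
open Set Function Filter Topology

universe u

/-- Points of the Arens-type space: `none` is the point `∞`, `some (Sum.inl n)` are the
first-level limit points, and `some (Sum.inr (n,k))` are the isolated points. -/
abbrev ArensPt : Type := Option (ℕ ⊕ ℕ × ℕ)

/-- Openness predicate for the Arens space. -/
def ArensOpen (U : Set ArensPt) : Prop :=
  (none ∈ U → ∀ᶠ n in Filter.atTop, some (Sum.inl n) ∈ U) ∧
  ∀ n : ℕ, some (Sum.inl n) ∈ U → ∀ᶠ k in Filter.atTop, some (Sum.inr (n, k)) ∈ U

def arensTop : TopologicalSpace ArensPt where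
  IsOpen := ArensOpen
  isOpen_univ := ⟨fun _ => Filter.Eventually.of_forall fun _ => trivial,
    fun _ _ => Filter.Eventually.of_forall fun _ => trivial⟩
  isOpen_inter := fun U V hU hV => by
    constructor
    · intro h; exact (hU.1 h.1).and (hV.1 h.2)
    · intro n h; exact (hU.2 n h.1).and (hV.2 n h.2)
  isOpen_sUnion := fun S hS => by
    constructor
    · rintro ⟨U, hU, hmem⟩
      exact ((hS U hU).1 hmem).mono fun n hn => ⟨U, hU, hn⟩
    · rintro n ⟨U, hU, hmem⟩
      exact ((hS U hU).2 n hmem).mono fun k hk => ⟨U, hU, hk⟩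

theorem arens_isOpen_iff {U : Set ArensPt} : @IsOpen _ arensTop U ↔ ArensOpen U := Iff.rfl

/-- The `n`-th "row with its limit point". -/
def ArensRow (n : ℕ) : Set ArensPt :=
  {x | x = some (Sum.inl n) ∨ ∃ k, x = some (Sum.inr (n, k))}

theorem arensRow_isOpen (n : ℕ) : @IsOpen _ arensTop (ArensRow n) := by
  rw [arens_isOpen_iff]
  constructor
  · rintro (h | ⟨k, h⟩) <;> simp_all [ArensRow]
  · intro m hm
    rcases hm with h | ⟨k, h⟩
    · obtain rfl : m = n := by simpa using h
      exact Filter.Eventually.of_forall fun k => Or.inr ⟨k, rfl⟩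
    · simp at h

theorem arensRow_compl_isOpen (n : ℕ) : @IsOpen _ arensTop (ArensRow n)ᶜ := by
  rw [arens_isOpen_iff]
  constructor
  · intro _
    filter_upwards [Filter.eventually_gt_atTop n] with m hm
    rintro (h | ⟨k, h⟩)
    · exact absurd (by simpa using h) hm.ne'
    · simp at h
  · intro m hm
    refine Filter.Eventually.of_forall fun k => ?_
    rintro (h | ⟨k', h⟩)
    · simp at h
    · obtain ⟨rfl, -⟩ : m = n ∧ k = k' := by simpa [Prod.ext_iff] using h
      exact hm (Or.inl rfl)

theorem arensIsolated_isOpen (p : ℕ × ℕ) :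
    @IsOpen _ arensTop {(some (Sum.inr p) : ArensPt)} := by
  rw [arens_isOpen_iff]
  exact ⟨fun h => by simp at h, fun n h => by simp at h⟩

theorem arensIsolated_compl_isOpen (p : ℕ × ℕ) :
    @IsOpen _ arensTop {(some (Sum.inr p) : ArensPt)}ᶜ := by
  rw [arens_isOpen_iff]
  constructor
  · intro _; exact Filter.Eventually.of_forall fun n => by simp
  · intro n _
    filter_upwards [Filter.eventually_ne_atTop p.2] with k hk
    simp only [Set.mem_compl_iff, Set.mem_singleton_iff, Option.some_inj]
    intro h
    obtain ⟨-, h2⟩ : n = p.1 ∧ k = p.2 := by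
      cases p; simpa [Prod.ext_iff] using h
    exact hk h2

theorem arens_t2 : @T2Space ArensPt arensTop := by
  letI : TopologicalSpace ArensPt := arensTop
  constructor
  intro a b hab
  rcases a with _ | a
  · rcases b with _ | b
    · exact absurd rfl hab
    · rcases b with n | p
      · refine ⟨(ArensRow n)ᶜ, ArensRow n, arensRow_compl_isOpen n, arensRow_isOpen n,
          ?_, Or.inl rfl, disjoint_compl_left⟩
        rintro (h | ⟨k, h⟩) <;> simp at h
      · exact ⟨{some (Sum.inr p)}ᶜ, {some (Sum.inr p)},
          arensIsolated_compl_isOpen p, arensIsolated_isOpen p,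
          by simp, rfl, disjoint_compl_left⟩
  · rcases a with n | p
    · rcases b with _ | b
      · refine ⟨ArensRow n, (ArensRow n)ᶜ, arensRow_isOpen n, arensRow_compl_isOpen n,
          Or.inl rfl, ?_, disjoint_compl_right⟩
        rintro (h | ⟨k, h⟩) <;> simp at h
      · rcases b with m | p
        · have hnm : n ≠ m := fun h => hab (by rw [h])
          refine ⟨ArensRow n, (ArensRow n)ᶜ, arensRow_isOpen n, arensRow_compl_isOpen n,
            Or.inl rfl, ?_, disjoint_compl_right⟩
          rintro (h | ⟨k, h⟩)
          · exact hnm (by simpa using h.symm)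
          · simp at h
        · exact ⟨{some (Sum.inr p)}ᶜ, {some (Sum.inr p)},
            arensIsolated_compl_isOpen p, arensIsolated_isOpen p,
            by simp, rfl, disjoint_compl_left⟩
    · refine ⟨{some (Sum.inr p)}, {some (Sum.inr p)}ᶜ,
        arensIsolated_isOpen p, arensIsolated_compl_isOpen p,
        rfl, ?_, disjoint_compl_right⟩
      simpa using hab.symm

/-- Suppose there is a map `g : Y → Z` which is a pointwise limit of Baire-one
maps but not Baire-one.  Then there are a countable Hausdorff space `X` and `f : X × Y → Z`
which is continuous in the first variable and has continuous `y`-sections for a dense set of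
`x`'s, but is not a pointwise limit of any sequence of separately continuous maps. -/
theorem exists_vertically_nearly_sep_cont_not_limit {Y Z : Type*} [TopologicalSpace Y]
    [tz : TopologicalSpace Z] (g : Y → Z)
    (hg : ∃ h : ℕ → Y → Z, (∀ n, BaireOne (h n)) ∧
      ∀ y : Y, Filter.Tendsto (fun n => h n y) Filter.atTop (nhds (g y)))
    (hng : ¬ BaireOne g) :
    ∃ (X : Type) (tX : TopologicalSpace X), Countable X ∧ @T2Space X tX ∧
      ∃ f : X × Y → Z,
        (∀ y : Y, @Continuous X Z tX tz fun x => f (x, y)) ∧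
        @Dense X tX {x : X | Continuous fun y => f (x, y)} ∧
        ¬ ∃ fs : ℕ → X × Y → Z,
            (∀ n : ℕ, (∀ y : Y, @Continuous X Z tX tz fun x => fs n (x, y)) ∧
              ∀ x : X, Continuous fun y => fs n (x, y)) ∧
            ∀ q : X × Y, Filter.Tendsto (fun n => fs n q) Filter.atTop (nhds (f q)) := by
  obtain ⟨h, hB, hlim⟩ := hg
  choose h' hcont htend using hB
  letI : TopologicalSpace ArensPt := arensTop
  refine ⟨ArensPt, arensTop, inferInstance, arens_t2, ?_⟩
  set f : ArensPt × Y → Z := fun p =>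
    match p.1 with
    | none => g p.2
    | some (Sum.inl n) => h n p.2
    | some (Sum.inr (n, k)) => h' n k p.2 with hf
  refine ⟨f, ?_, ?_, ?_⟩
  · -- continuity in the first variable
    intro y
    rw [continuous_def]
    intro W hW
    rw [arens_isOpen_iff]
    constructor
    · intro hmem
      have : g y ∈ W := hmem
      have := (hlim y).eventually (hW.mem_nhds this)
      exact this.mono fun n hn => hn
    · intro n hmem
      have : h n y ∈ W := hmem
      have := (htend n y).eventually (hW.mem_nhds this)
      exact this.mono fun k hk => hk
  · -- density of points with continuous sections
    have hsub : Set.range (fun p : ℕ × ℕ => (some (Sum.inr p) : ArensPt)) ⊆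
        {x : ArensPt | Continuous fun y => f (x, y)} := by
      rintro _ ⟨⟨n, k⟩, rfl⟩
      exact hcont n k
    refine Dense.mono hsub ?_
    rw [dense_iff_inter_open]
    rintro U hU ⟨x, hx⟩
    rcases x with _ | x
    · obtain ⟨n, hn⟩ := ((arens_isOpen_iff.mp hU).1 hx).exists
      obtain ⟨k, hk⟩ := ((arens_isOpen_iff.mp hU).2 n hn).exists
      exact ⟨some (Sum.inr (n, k)), hk, ⟨(n, k), rfl⟩⟩
    · rcases x with n | p
      · obtain ⟨k, hk⟩ := ((arens_isOpen_iff.mp hU).2 n hx).exists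
        exact ⟨some (Sum.inr (n, k)), hk, ⟨(n, k), rfl⟩⟩
      · exact ⟨some (Sum.inr p), hx, ⟨p, rfl⟩⟩
  · -- not a pointwise limit of separately continuous maps
    rintro ⟨fs, hsep, hptw⟩
    exact hng ⟨fun n y => fs n (none, y), fun n => (hsep n).2 none,
      fun y => hptw (none, y)⟩
end

section
/- Let X = ℝ^∞ be the set of all real sequences with finite support, endowed with the topology in which a set W ⊆ X is open iff for every x ∈ W there exists a sequence (ε_n)_{n∈ℕ} of positive reals such that {y ∈ X : |y_n − x_n| ≤ ε_n for all n} ⊆ W. Then there exists a function f : X × ℝ → ℝ such that: (a) x ↦ f(x,y) is continuous for every y ∈ ℝ; (b) the set {x ∈ X : the function y ↦ f(x,y) is continuous} is dense in X; yet (c) f is not the pointwise limit of any sequence of separately continuous functions f_n : X × ℝ → ℝ. -/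
open Set Function Filter Topology

universe u

/-- `ℝ^∞`: the real sequences with finite support. -/
def Rinfty : Type := {x : ℕ → ℝ // (Function.support x).Finite}

/-- The topology on `ℝ^∞` in which `W` is open iff around every `x ∈ W` it contains a box
`{y : |yₙ - xₙ| ≤ εₙ for all n}` for some sequence `ε` of positive reals. -/
instance : TopologicalSpace Rinfty where
  IsOpen W := ∀ x ∈ W, ∃ ε : ℕ → ℝ, (∀ n, 0 < ε n) ∧
    {y : Rinfty | ∀ n, |y.1 n - x.1 n| ≤ ε n} ⊆ W
  isOpen_univ := fun _ _ => ⟨fun _ => 1, fun _ => one_pos, fun _ _ => trivial⟩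
  isOpen_inter := by
    intro s t hs ht x hx
    obtain ⟨ε₁, hε₁, h₁⟩ := hs x hx.1
    obtain ⟨ε₂, hε₂, h₂⟩ := ht x hx.2
    refine ⟨fun n => min (ε₁ n) (ε₂ n), fun n => lt_min (hε₁ n) (hε₂ n), fun y hy => ?_⟩
    exact ⟨h₁ fun n => (hy n).trans (min_le_left _ _),
      h₂ fun n => (hy n).trans (min_le_right _ _)⟩
  isOpen_sUnion := by
    intro S hS x hx
    obtain ⟨t, htS, hxt⟩ := hx
    obtain ⟨ε, hε, h⟩ := hS t htS x hxt
    exact ⟨ε, hε, fun y hy => ⟨t, htS, h hy⟩⟩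


/-! ### Auxiliary development for the example -/

namespace RinftyAux

open Metric

open scoped Classical

noncomputable section

lemma isClosed_intRange : IsClosed (Set.range ((↑) : ℤ → ℝ)) :=
  Int.isClosedEmbedding_coe_real.isClosed_range

/-- distance from `2^k * y` to the integers -/
def dd (k : ℕ) (y : ℝ) : ℝ := Metric.infDist ((2:ℝ)^k * y) (Set.range ((↑) : ℤ → ℝ))

lemma dd_nonneg (k : ℕ) (y : ℝ) : 0 ≤ dd k y := Metric.infDist_nonneg

lemma continuous_dd (k : ℕ) : Continuous (dd k) :=
  (Metric.continuous_infDist_pt _).comp (continuous_const.mul continuous_id)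

lemma dd_eq_zero_iff {k : ℕ} {y : ℝ} : dd k y = 0 ↔ ∃ m : ℤ, (2:ℝ)^k * y = m := by
  rw [dd, ← isClosed_intRange.mem_iff_infDist_zero ⟨(0:ℝ), ⟨0, by norm_num⟩⟩]
  simp only [Set.mem_range]
  exact ⟨fun ⟨m, hm⟩ => ⟨m, hm.symm⟩, fun ⟨m, hm⟩ => ⟨m, hm.symm⟩⟩

lemma dd_zero_mono {k l : ℕ} {y : ℝ} (h : dd k y = 0) (hkl : k ≤ l) : dd l y = 0 := by
  rw [dd_eq_zero_iff] at h ⊢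
  obtain ⟨m, hm⟩ := h
  refine ⟨2^(l-k) * m, ?_⟩
  have h2 : (2:ℝ)^l = 2^(l-k) * 2^k := by rw [← pow_add]; congr 1; omega
  push_cast
  rw [h2, mul_assoc, hm]

/-- the weight `N(x) = Σ |x_j|` -/
def NN (x : Rinfty) : ℝ := ∑ᶠ j, |x.1 j|

lemma NN_eq_sum (x : Rinfty) {T : Finset ℕ} (hT : Function.support x.1 ⊆ ↑T) :
    NN x = ∑ j ∈ T, |x.1 j| := by
  refine finsum_eq_sum_of_support_subset _ ?_
  intro j hj
  apply hT
  simp only [Function.mem_support] at hj ⊢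
  exact fun h0 => hj (by rw [h0, abs_zero])

lemma NN_nonneg (x : Rinfty) : 0 ≤ NN x := by
  rw [NN_eq_sum x (T := x.2.toFinset) (fun i hi => x.2.mem_toFinset.2 hi)]
  exact Finset.sum_nonneg fun j _ => abs_nonneg _

lemma geom_finset_le (T : Finset ℕ) : ∑ j ∈ T, ((1:ℝ)/2)^(j+1) ≤ 1 := by
  have he : (fun j : ℕ => ((1:ℝ)/2)^(j+1)) = fun j : ℕ => ((1:ℝ)/2)^j * (1/2) := by
    funext n
    rw [pow_succ]
  have hsummable : Summable (fun j : ℕ => ((1:ℝ)/2)^(j+1)) := by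
    rw [he]
    exact (summable_geometric_of_lt_one (by norm_num : (0:ℝ) ≤ 1/2)
      (by norm_num : (1:ℝ)/2 < 1)).mul_right (1/2)
  have h1 : ∑' j : ℕ, ((1:ℝ)/2)^(j+1) = 1 := by
    have h2 : ∑' j : ℕ, ((1:ℝ)/2)^(j+1) = (∑' j : ℕ, ((1:ℝ)/2)^j) * (1/2) := by
      rw [← tsum_mul_right]
      exact tsum_congr fun n => pow_succ _ _
    rw [h2, tsum_geometric_two]
    norm_num
  calc ∑ j ∈ T, ((1:ℝ)/2)^(j+1) ≤ ∑' j : ℕ, ((1:ℝ)/2)^(j+1) :=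
        Summable.sum_le_tsum T (fun i _ => by positivity) hsummable
    _ = 1 := h1

lemma NN_single_le (x : Rinfty) (j : ℕ) : |x.1 j| ≤ NN x := by
  classical
  have hT : Function.support x.1 ⊆ ↑(insert j x.2.toFinset) := by
    intro i hi
    simp only [Finset.coe_insert, Set.mem_insert_iff]
    right
    exact x.2.mem_toFinset.2 hi
  rw [NN_eq_sum x hT]
  exact Finset.single_le_sum (f := fun i => |x.1 i|) (fun i _ => abs_nonneg _)
    (Finset.mem_insert_self j _)

lemma NN_diff {x x' : Rinfty} {c : ℝ} (hc : 0 ≤ c)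
    (h : ∀ n, |x'.1 n - x.1 n| ≤ c * (1/2)^(n+1)) : |NN x' - NN x| ≤ c := by
  classical
  set T : Finset ℕ := (x.2.union x'.2).toFinset with hTdef
  have hTx : Function.support x.1 ⊆ ↑T := by
    intro i hi
    rw [hTdef]
    simp only [Set.Finite.coe_toFinset, Set.mem_union]
    left; exact hi
  have hTx' : Function.support x'.1 ⊆ ↑T := by
    intro i hi
    rw [hTdef]
    simp only [Set.Finite.coe_toFinset, Set.mem_union]
    right; exact hi
  rw [NN_eq_sum x hTx, NN_eq_sum x' hTx', ← Finset.sum_sub_distrib]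
  calc |∑ j ∈ T, (|x'.1 j| - |x.1 j|)| ≤ ∑ j ∈ T, |(|x'.1 j| - |x.1 j|)| :=
        Finset.abs_sum_le_sum_abs _ _
    _ ≤ ∑ j ∈ T, c * (1/2)^(j+1) := by
        refine Finset.sum_le_sum fun j _ => ?_
        exact (abs_abs_sub_abs_le_abs_sub _ _).trans (h j)
    _ = c * ∑ j ∈ T, ((1:ℝ)/2)^(j+1) := by rw [Finset.mul_sum]
    _ ≤ c * 1 := mul_le_mul_of_nonneg_left (geom_finset_le T) hc
    _ = c := mul_one c

/-- heights -/
def hh (k : ℕ) (x : Rinfty) : ℝ := max (1 - 2^k * NN x) 0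

lemma hh_nonneg (k : ℕ) (x : Rinfty) : 0 ≤ hh k x := le_max_right _ _

lemma hh_le_one (k : ℕ) (x : Rinfty) : hh k x ≤ 1 := by
  rw [hh]
  apply max_le _ zero_le_one
  have h1 : (0:ℝ) ≤ 2^k * NN x := mul_nonneg (by positivity) (NN_nonneg x)
  linarith

lemma hh_anti {k l : ℕ} (hkl : k ≤ l) (x : Rinfty) : hh l x ≤ hh k x := by
  apply max_le_max _ le_rfl
  have h2 : (2:ℝ)^k ≤ 2^l := pow_le_pow_right₀ one_le_two hkl
  nlinarith [NN_nonneg x]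

lemma hh_diff (k : ℕ) (x x' : Rinfty) :
    |hh k x' - hh k x| ≤ 2^k * |NN x' - NN x| := by
  refine (abs_max_sub_max_le_abs _ _ _).trans ?_
  rw [show (1 - 2^k * NN x') - (1 - 2^k * NN x) = (2:ℝ)^k * (NN x - NN x') by ring, abs_mul,
    abs_of_pos (by positivity : (0:ℝ) < 2^k), abs_sub_comm]

lemma hh_eq_zero {k : ℕ} {x : Rinfty} (h : 1 ≤ 2^k * NN x) : hh k x = 0 := by
  rw [hh, max_eq_right]
  linarith

/-- combs: tent of width `δ` around the grid `2^{-k} ℤ` -/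
def cb (k : ℕ) (δ y : ℝ) : ℝ :=
  if dd k y = 0 then 1 else if δ = 0 then 0 else max (1 - dd k y / δ) 0

lemma cb_nonneg (k : ℕ) (δ y : ℝ) : 0 ≤ cb k δ y := by
  rw [cb]
  split_ifs
  · exact zero_le_one
  · exact le_rfl
  · exact le_max_right _ _

lemma cb_le_one (k : ℕ) {δ : ℝ} (y : ℝ) (hδ : 0 ≤ δ) : cb k δ y ≤ 1 := by
  rw [cb]
  split_ifs with h1 h2
  · exact le_rfl
  · exact zero_le_one
  · apply max_le _ zero_le_one
    have hδ' : 0 < δ := lt_of_le_of_ne hδ (Ne.symm h2)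
    have h3 : 0 ≤ dd k y / δ := div_nonneg (dd_nonneg _ _) hδ
    linarith

lemma cb_of_dd_zero {k : ℕ} {δ y : ℝ} (h : dd k y = 0) : cb k δ y = 1 := by
  rw [cb, if_pos h]

lemma cb_zero_of_le {k : ℕ} {δ y : ℝ} (hd : dd k y ≠ 0) (hδ0 : 0 ≤ δ)
    (hle : δ ≤ dd k y) : cb k δ y = 0 := by
  rw [cb, if_neg hd]
  rcases eq_or_lt_of_le hδ0 with h0 | hpos
  · rw [if_pos h0.symm]
  · rw [if_neg (ne_of_gt hpos), max_eq_right]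
    have h1 : 1 ≤ dd k y / δ := (one_le_div hpos).2 hle
    linarith

lemma continuous_cb_y (k : ℕ) {δ : ℝ} (hδ : δ ≠ 0) : Continuous fun y => cb k δ y := by
  have hfun : (fun y => cb k δ y) = fun y => max (1 - dd k y / δ) 0 := by
    funext y
    rw [cb]
    split_ifs with h1
    · rw [h1]
      norm_num
    · rfl
  rw [hfun]
  exact (continuous_const.sub ((continuous_dd k).div_const δ)).max continuous_const

/-- the spike terms and their supremum -/
def TT (k : ℕ) (x : Rinfty) (y : ℝ) : ℝ := hh k x * cb k (|x.1 k|) y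

lemma TT_nonneg (k : ℕ) (x : Rinfty) (y : ℝ) : 0 ≤ TT k x y :=
  mul_nonneg (hh_nonneg _ _) (cb_nonneg _ _ _)

lemma TT_le_one (k : ℕ) (x : Rinfty) (y : ℝ) : TT k x y ≤ 1 := by
  rw [TT]
  have h1 := hh_le_one k x
  have h2 := hh_nonneg k x
  have h3 := cb_nonneg k (|x.1 k|) y
  have h4 := cb_le_one k (δ := |x.1 k|) y (abs_nonneg _)
  nlinarith

/-- the function of the example -/
def FF (x : Rinfty) (y : ℝ) : ℝ := ⨆ k, TT k x y

lemma bddAbove_TT (x : Rinfty) (y : ℝ) : BddAbove (Set.range fun k => TT k x y) := by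
  refine ⟨1, ?_⟩
  rintro _ ⟨k, rfl⟩
  exact TT_le_one k x y

lemma TT_le_FF (k : ℕ) (x : Rinfty) (y : ℝ) : TT k x y ≤ FF x y :=
  le_ciSup (bddAbove_TT x y) k

lemma FF_nonneg (x : Rinfty) (y : ℝ) : 0 ≤ FF x y :=
  Real.iSup_nonneg fun k => TT_nonneg k x y

lemma FF_le_one (x : Rinfty) (y : ℝ) : FF x y ≤ 1 := ciSup_le fun k => TT_le_one k x y

/-- partial maxima -/
def pmax (T : ℕ → ℝ) : ℕ → ℝ
  | 0 => T 0
  | K+1 => max (pmax T K) (T (K+1))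

lemma le_pmax (T : ℕ → ℝ) {k K : ℕ} (h : k ≤ K) : T k ≤ pmax T K := by
  induction K with
  | zero =>
    have : k = 0 := by omega
    subst this
    exact le_rfl
  | succ n ih =>
    rcases Nat.lt_or_ge k (n+1) with h' | h'
    · exact (ih (by omega)).trans (le_max_left _ _)
    · have hk : k = n + 1 := by omega
      subst hk
      exact le_max_right _ _

lemma pmax_exists (T : ℕ → ℝ) (K : ℕ) : ∃ j, j ≤ K ∧ pmax T K = T j := by
  induction K with
  | zero => exact ⟨0, le_rfl, rfl⟩
  | succ n ih =>
    obtain ⟨j, hj, hje⟩ := ih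
    rcases max_cases (pmax T n) (T (n+1)) with ⟨h1, _⟩ | ⟨h1, _⟩
    · exact ⟨j, by omega, by rw [pmax, h1, hje]⟩
    · exact ⟨n+1, le_rfl, by rw [pmax, h1]⟩

lemma iSup_eq_pmax (T : ℕ → ℝ) (K : ℕ) (hbdd : BddAbove (Set.range T))
    (hb : ∀ k, T k ≤ pmax T K) : (⨆ k, T k) = pmax T K := by
  refine le_antisymm (ciSup_le hb) ?_
  obtain ⟨j, _, hje⟩ := pmax_exists T K
  rw [hje]
  exact le_ciSup hbdd j

lemma continuous_pmax {T : ℕ → ℝ → ℝ} (h : ∀ k, Continuous (T k)) (K : ℕ) :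
    Continuous fun y => pmax (fun k => T k y) K := by
  induction K with
  | zero => exact h 0
  | succ n ih => exact ih.max (h (n+1))

/-- a product-difference bound -/
lemma mul_diff_le {a b a' b' : ℝ} (ha : 0 ≤ a) (ha1 : a ≤ 1) (hb' : 0 ≤ b') (hb'1 : b' ≤ 1) :
    |a' * b' - a * b| ≤ |a' - a| + |b' - b| := by
  have he : a' * b' - a * b = (a' - a) * b' + a * (b' - b) := by ring
  rw [he]
  refine (abs_add_le _ _).trans ?_
  rw [abs_mul, abs_mul]
  have h1 : |a' - a| * |b'| ≤ |a' - a| * 1 := by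
    apply mul_le_mul_of_nonneg_left _ (abs_nonneg _)
    rw [abs_of_nonneg hb']
    exact hb'1
  have h2 : |a| * |b' - b| ≤ 1 * |b' - b| := by
    apply mul_le_mul_of_nonneg_right _ (abs_nonneg _)
    rw [abs_of_nonneg ha]
    exact ha1
  linarith

/-- box characterization of open sets -/
lemma rinfty_isOpen_iff {W : Set Rinfty} : IsOpen W ↔ ∀ x ∈ W, ∃ ε : ℕ → ℝ,
    (∀ n, 0 < ε n) ∧ {y : Rinfty | ∀ n, |y.1 n - x.1 n| ≤ ε n} ⊆ W := Iff.rfl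

lemma continuous_of_box {g : Rinfty → ℝ}
    (H : ∀ x : Rinfty, ∀ ε : ℝ, 0 < ε → ∃ εs : ℕ → ℝ, (∀ n, 0 < εs n) ∧
      ∀ x' : Rinfty, (∀ n, |x'.1 n - x.1 n| ≤ εs n) → |g x' - g x| ≤ ε) :
    Continuous g := by
  rw [continuous_def]
  intro U hU
  rw [rinfty_isOpen_iff]
  intro x hx
  obtain ⟨r, hr, hball⟩ := Metric.isOpen_iff.1 hU (g x) hx
  obtain ⟨εs, hpos, hbox⟩ := H x (r/2) (by linarith)
  refine ⟨εs, hpos, fun x' hx' => ?_⟩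
  apply hball
  rw [Metric.mem_ball, Real.dist_eq]
  have := hbox x' hx'
  linarith

/-- the box used in the main continuity estimate -/
def boxP (x : Rinfty) (y : ℝ) (ε : ℝ) (n : ℕ) : ℝ :=
  if x.1 n = 0 then (if dd n y = 0 then 1 else dd n y)
  else min (|x.1 n|/2) (ε * |x.1 n|^2 / (8 * (dd n y + 1)))

lemma boxP_pos (x : Rinfty) (y : ℝ) {ε : ℝ} (hε : 0 < ε) (n : ℕ) : 0 < boxP x y ε n := by
  rw [boxP]
  split_ifs with h1 h2
  · exact one_pos
  · exact lt_of_le_of_ne (dd_nonneg n y) (Ne.symm h2)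
  · have hx : 0 < |x.1 n| := abs_pos.2 h1
    apply lt_min (by positivity)
    have hd : (0:ℝ) < 8 * (dd n y + 1) := by nlinarith [dd_nonneg n y]
    positivity

/-- key per-index estimate -/
lemma TT_diff_le {y : ℝ} {x x' : Rinfty} {ε : ℝ} (hε : 0 < ε) {K k : ℕ} (hk : k ≤ K)
    (hND : |NN x' - NN x| ≤ ε / (2 * 2^K))
    (hP : |x'.1 k - x.1 k| ≤ boxP x y ε k) :
    |TT k x' y - TT k x y| ≤ ε := by
  have hhd : |hh k x' - hh k x| ≤ ε/2 := by
    refine (hh_diff k x x').trans ?_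
    have h2 : (2:ℝ)^k ≤ 2^K := pow_le_pow_right₀ one_le_two hk
    have h3 : (0:ℝ) < 2^K := by positivity
    have h4 : (2:ℝ)^k * |NN x' - NN x| ≤ 2^K * (ε / (2 * 2^K)) :=
      mul_le_mul h2 hND (abs_nonneg _) h3.le
    refine h4.trans (le_of_eq ?_)
    field_simp
  have hcd : |cb k (|x'.1 k|) y - cb k (|x.1 k|) y| ≤ ε/2 := by
    by_cases hd0 : dd k y = 0
    · rw [cb_of_dd_zero hd0, cb_of_dd_zero hd0, sub_self, abs_zero]
      positivity
    · by_cases hx0 : x.1 k = 0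
      · have hc : cb k (|x.1 k|) y = 0 := by
          rw [hx0, abs_zero]
          exact cb_zero_of_le hd0 le_rfl (le_of_lt (lt_of_le_of_ne (dd_nonneg k y) (Ne.symm hd0)))
        have hP' : |x'.1 k| ≤ dd k y := by
          have h5 := hP
          rw [boxP, if_pos hx0, if_neg hd0] at h5
          calc |x'.1 k| = |x'.1 k - x.1 k| := by rw [hx0, sub_zero]
            _ ≤ dd k y := h5
        have hc' : cb k (|x'.1 k|) y = 0 := cb_zero_of_le hd0 (abs_nonneg _) hP'
        rw [hc, hc', sub_self, abs_zero]
        positivity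
      · -- the Lipschitz case
        have hd : 0 < dd k y := lt_of_le_of_ne (dd_nonneg k y) (Ne.symm hd0)
        set d := dd k y with hdd
        set δ := |x.1 k| with hδdef
        set δ' := |x'.1 k| with hδ'def
        have hδpos : 0 < δ := abs_pos.2 hx0
        have hPk : |x'.1 k - x.1 k| ≤ min (δ/2) (ε * δ^2 / (8 * (d + 1))) := by
          have h5 := hP
          rwa [boxP, if_neg hx0] at h5
        have habs : |δ' - δ| ≤ |x'.1 k - x.1 k| := abs_abs_sub_abs_le_abs_sub _ _
        have h6 : |δ' - δ| ≤ δ/2 := habs.trans (hPk.trans (min_le_left _ _))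
        have h7 : |δ' - δ| ≤ ε * δ^2 / (8 * (d + 1)) := habs.trans (hPk.trans (min_le_right _ _))
        have h8 := abs_le.1 h6
        have hδ'half : δ/2 ≤ δ' := by linarith [h8.1]
        have hδ'pos : 0 < δ' := by linarith
        have hcb : cb k δ y = max (1 - d/δ) 0 := by
          rw [cb, if_neg hd0, if_neg (ne_of_gt hδpos)]
        have hcb' : cb k δ' y = max (1 - d/δ') 0 := by
          rw [cb, if_neg hd0, if_neg (ne_of_gt hδ'pos)]
        rw [hcb, hcb']
        refine (abs_max_sub_max_le_abs _ _ _).trans ?_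
        have he : (1 - d/δ') - (1 - d/δ) = d * (δ' - δ) / (δ' * δ) := by
          field_simp
          ring
        rw [he, abs_div, abs_mul, abs_of_pos hd, abs_of_pos (mul_pos hδ'pos hδpos)]
        rw [div_le_iff₀ (mul_pos hδ'pos hδpos)]
        have h9 : d * |δ' - δ| ≤ d * (ε * δ^2 / (8 * (d + 1))) :=
          mul_le_mul_of_nonneg_left h7 hd.le
        have h10 : d * (ε * δ^2 / (8 * (d + 1))) ≤ ε * δ^2 / 8 := by
          rw [mul_div_assoc']
          rw [div_le_div_iff₀ (by positivity) (by norm_num : (0:ℝ) < 8)]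
          nlinarith [sq_nonneg δ, mul_nonneg hε.le (sq_nonneg δ)]
        have h11 : ε * δ^2 / 8 ≤ ε / 2 * (δ' * δ) := by
          have : ε / 2 * ((δ/2) * δ) ≤ ε / 2 * (δ' * δ) := by
            apply mul_le_mul_of_nonneg_left _ (by positivity)
            apply mul_le_mul_of_nonneg_right hδ'half hδpos.le
          calc ε * δ^2 / 8 ≤ ε / 2 * ((δ/2) * δ) := by nlinarith [sq_nonneg δ]
            _ ≤ ε / 2 * (δ' * δ) := this
        linarith
  calc |TT k x' y - TT k x y|
      ≤ |hh k x' - hh k x| + |cb k (|x'.1 k|) y - cb k (|x.1 k|) y| :=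
        mul_diff_le (hh_nonneg k x) (hh_le_one k x) (cb_nonneg _ _ _) (cb_le_one _ _ (abs_nonneg _))
    _ ≤ ε/2 + ε/2 := add_le_add hhd hcd
    _ = ε := by ring

/-- combining per-index estimates into an estimate for `FF` -/
lemma FF_close {y : ℝ} (x x' : Rinfty) {ε : ℝ} (K j₀ : ℕ) (hj : j₀ ≤ K)
    (hK : ∀ k, k ≤ K → |TT k x' y - TT k x y| ≤ ε)
    (htail : ∀ k, K < k → TT k x' y ≤ TT j₀ x' y ∧ TT k x y ≤ TT j₀ x y) :
    |FF x' y - FF x y| ≤ ε := by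
  rw [abs_sub_le_iff]
  constructor
  · rw [sub_le_iff_le_add]
    apply ciSup_le
    intro k
    rcases le_or_gt k K with h | h
    · have h1 := abs_sub_le_iff.1 (hK k h)
      have h2 := TT_le_FF k x y
      linarith [h1.1]
    · have h1 := (htail k h).1
      have h2 := abs_sub_le_iff.1 (hK j₀ hj)
      have h3 := TT_le_FF j₀ x y
      linarith [h2.1]
  · rw [sub_le_iff_le_add]
    apply ciSup_le
    intro k
    rcases le_or_gt k K with h | h
    · have h1 := abs_sub_le_iff.1 (hK k h)
      have h2 := TT_le_FF k x' y
      linarith [h1.2]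
    · have h1 := (htail k h).2
      have h2 := abs_sub_le_iff.1 (hK j₀ hj)
      have h3 := TT_le_FF j₀ x' y
      linarith [h2.2]

/-- MAIN A: continuity in `x` for every fixed `y` -/
lemma continuous_FF_x (y : ℝ) : Continuous fun x => FF x y := by
  classical
  apply continuous_of_box
  intro x ε hε
  have hKS : ∀ n, x.1 n ≠ 0 → n ≤ x.2.toFinset.sup id := fun n hn =>
    Finset.le_sup (f := id) (x.2.mem_toFinset.2 hn)
  by_cases hD : ∃ k, dd k y = 0
  · -- dyadic case
    set k₀ := Nat.find hD with hk₀def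
    have hk₀ : dd k₀ y = 0 := Nat.find_spec hD
    set K := max (x.2.toFinset.sup id) k₀ with hKdef
    refine ⟨fun n => min (ε / (2 * 2^K) * (1/2)^(n+1)) (boxP x y ε n),
      fun n => lt_min (by positivity) (boxP_pos x y hε n), ?_⟩
    intro x' hx'
    have hbox1 : ∀ n, |x'.1 n - x.1 n| ≤ ε / (2 * 2^K) * (1/2)^(n+1) :=
      fun n => (hx' n).trans (min_le_left _ _)
    have hboxP : ∀ n, |x'.1 n - x.1 n| ≤ boxP x y ε n :=
      fun n => (hx' n).trans (min_le_right _ _)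
    have hND : |NN x' - NN x| ≤ ε / (2 * 2^K) := NN_diff (by positivity) hbox1
    refine FF_close x x' K k₀ (le_max_right _ _) (fun k hk => TT_diff_le hε hk hND (hboxP k)) ?_
    intro k hk
    have hk₀k : k₀ ≤ k := le_trans (le_max_right _ _) hk.le
    have hdk : dd k y = 0 := dd_zero_mono hk₀ hk₀k
    constructor
    · rw [TT, TT, cb_of_dd_zero hdk, cb_of_dd_zero hk₀, mul_one, mul_one]
      exact hh_anti hk₀k x'
    · rw [TT, TT, cb_of_dd_zero hdk, cb_of_dd_zero hk₀, mul_one, mul_one]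
      exact hh_anti hk₀k x
  · -- non-dyadic case
    push_neg at hD
    set K := x.2.toFinset.sup id with hKdef
    refine ⟨fun n => min (ε / (2 * 2^K) * (1/2)^(n+1)) (boxP x y ε n),
      fun n => lt_min (by positivity) (boxP_pos x y hε n), ?_⟩
    intro x' hx'
    have hbox1 : ∀ n, |x'.1 n - x.1 n| ≤ ε / (2 * 2^K) * (1/2)^(n+1) :=
      fun n => (hx' n).trans (min_le_left _ _)
    have hboxP : ∀ n, |x'.1 n - x.1 n| ≤ boxP x y ε n :=
      fun n => (hx' n).trans (min_le_right _ _)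
    have hND : |NN x' - NN x| ≤ ε / (2 * 2^K) := NN_diff (by positivity) hbox1
    refine FF_close x x' K 0 (Nat.zero_le _) (fun k hk => TT_diff_le hε hk hND (hboxP k)) ?_
    intro k hk
    have hxk : x.1 k = 0 := by
      by_contra h
      exact absurd (hKS k h) (by omega)
    have h1 : TT k x y = 0 := by
      rw [TT, hxk, abs_zero,
        cb_zero_of_le (hD k) le_rfl (lt_of_le_of_ne (dd_nonneg k y) (Ne.symm (hD k))).le, mul_zero]
    have h2 : TT k x' y = 0 := by
      have hP' : |x'.1 k| ≤ dd k y := by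
        have h5 := hboxP k
        rw [boxP, if_pos hxk, if_neg (hD k)] at h5
        calc |x'.1 k| = |x'.1 k - x.1 k| := by rw [hxk, sub_zero]
          _ ≤ dd k y := h5
      rw [TT, cb_zero_of_le (hD k) (abs_nonneg _) hP', mul_zero]
    rw [h1, h2]
    exact ⟨TT_nonneg 0 x' y, TT_nonneg 0 x y⟩

/-- MAIN B: continuity of the `y`-section at good points -/
lemma continuous_FF_section {x : Rinfty} {K : ℕ}
    (hne : ∀ k, k ≤ K → x.1 k ≠ 0) (hz : ∀ k, K < k → hh k x = 0) :
    Continuous fun y => FF x y := by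
  have heq : (fun y => FF x y) = fun y => pmax (fun k => TT k x y) K := by
    funext y
    apply iSup_eq_pmax _ _ (bddAbove_TT x y)
    intro k
    rcases le_or_gt k K with h | h
    · exact le_pmax (fun k => TT k x y) h
    · have h1 : TT k x y = 0 := by rw [TT, hz k h, zero_mul]
      rw [h1]
      exact (TT_nonneg 0 x y).trans (le_pmax (fun k => TT k x y) (Nat.zero_le K))
  rw [heq]
  apply continuous_pmax
  intro k
  rcases le_or_gt k K with h | h
  · exact continuous_const.mul (continuous_cb_y k (abs_ne_zero.2 (hne k h)))
  · exact continuous_const.congr fun y => (by rw [TT, hz k h, zero_mul] : TT k x y = 0).symm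

/-- the zero point -/
def x₀ : Rinfty :=
  ⟨fun _ => 0, Set.Finite.subset Set.finite_empty (by
    intro a ha
    simp [Function.mem_support] at ha)⟩

/-- the set of dyadic rationals -/
def Dset : Set ℝ := {y | ∃ k : ℕ, dd k y = 0}

lemma NN_x₀ : NN x₀ = 0 := by
  rw [NN_eq_sum x₀ (T := ∅) (by
    intro a ha
    simp [x₀, Function.mem_support] at ha)]
  simp

lemma FF_x₀ (y : ℝ) : FF x₀ y = if y ∈ Dset then 1 else 0 := by
  classical
  have hTT : ∀ k, TT k x₀ y = if dd k y = 0 then 1 else 0 := by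
    intro k
    rw [TT, hh, NN_x₀, mul_zero, sub_zero, max_eq_left zero_le_one, one_mul]
    show cb k |(0:ℝ)| y = _
    rw [abs_zero]
    by_cases h1 : dd k y = 0
    · rw [cb_of_dd_zero h1, if_pos h1]
    · rw [cb, if_neg h1, if_pos rfl, if_neg h1]
  by_cases hy : y ∈ Dset
  · rw [if_pos hy]
    obtain ⟨k, hk⟩ := hy
    refine le_antisymm (FF_le_one _ _) ?_
    have h1 := TT_le_FF k x₀ y
    rwa [hTT k, if_pos hk] at h1
  · rw [if_neg hy]
    have h0 : ∀ k, TT k x₀ y = 0 := by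
      intro k
      rw [hTT k, if_neg (fun h => hy ⟨k, h⟩)]
    rw [FF]
    simp only [h0]
    exact ciSup_const

lemma countable_Dset : Dset.Countable := by
  have he : Dset = ⋃ k : ℕ, Set.range (fun m : ℤ => (m:ℝ) / 2^k) := by
    ext y
    simp only [Dset, Set.mem_setOf_eq, Set.mem_iUnion, Set.mem_range]
    constructor
    · rintro ⟨k, hk⟩
      obtain ⟨m, hm⟩ := dd_eq_zero_iff.1 hk
      refine ⟨k, m, ?_⟩
      rw [eq_comm, eq_div_iff (by positivity : ((2:ℝ)^k) ≠ 0)]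
      linear_combination hm
    · rintro ⟨k, m, hm⟩
      refine ⟨k, dd_eq_zero_iff.2 ⟨m, ?_⟩⟩
      rw [← hm]
      field_simp
  rw [he]
  exact Set.countable_iUnion fun k => Set.countable_range _

lemma dense_Dset : Dense Dset := by
  rw [dense_iff_exists_between]
  intro a b hab
  obtain ⟨k, hk⟩ := exists_pow_lt_of_lt_one (sub_pos.2 hab) (by norm_num : (1:ℝ)/2 < 1)
  have hpk : (0:ℝ) < 2^k := by positivity
  have hpk1 : ((1:ℝ)/2)^k * (2:ℝ)^k = 1 := by
    rw [← mul_pow]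
    norm_num
  refine ⟨((⌊(2:ℝ)^k * a⌋ + 1 : ℤ) : ℝ) / 2^k,
    ⟨k, dd_eq_zero_iff.2 ⟨⌊(2:ℝ)^k * a⌋ + 1, by push_cast; field_simp⟩⟩, ?_, ?_⟩
  · rw [lt_div_iff₀ hpk]
    push_cast
    have h1 := Int.lt_floor_add_one ((2:ℝ)^k * a)
    linarith
  · rw [div_lt_iff₀ hpk]
    push_cast
    have h1 := Int.floor_le ((2:ℝ)^k * a)
    have h2 : ((1:ℝ)/2)^k * (2:ℝ)^k < (b - a) * 2^k :=
      mul_lt_mul_of_pos_right hk hpk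
    rw [hpk1] at h2
    nlinarith

lemma dense_Dset_compl : Dense Dsetᶜ := countable_Dset.dense_compl ℝ

/-- no sequence of continuous functions converges pointwise to the indicator of `Dset` -/
lemma no_baire_indicator (g : ℕ → ℝ → ℝ) (hg : ∀ n, Continuous (g n))
    (hlim : ∀ y : ℝ, Filter.Tendsto (fun n => g n y) Filter.atTop
      (nhds (if y ∈ Dset then (1:ℝ) else 0))) : False := by
  classical
  set C : ℕ × Bool → Set ℝ := fun p =>
    if p.2 then ⋂ n, ⋂ (_ : p.1 ≤ n), (g n)⁻¹' (Set.Ici (3/4 : ℝ))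
    else ⋂ n, ⋂ (_ : p.1 ≤ n), (g n)⁻¹' (Set.Iic (1/4 : ℝ)) with hC
  have hclosed : ∀ p, IsClosed (C p) := by
    rintro ⟨N, b⟩
    cases b
    · simp only [hC, if_neg Bool.false_ne_true]
      exact isClosed_iInter fun n => isClosed_iInter fun _ => isClosed_Iic.preimage (hg n)
    · simp only [hC, if_pos rfl]
      exact isClosed_iInter fun n => isClosed_iInter fun _ => isClosed_Ici.preimage (hg n)
  have hev : ∀ y : ℝ, ∃ N : ℕ, ∀ n, N ≤ n →
      (if y ∈ Dset then (3/4 : ℝ) ≤ g n y else g n y ≤ (1/4 : ℝ)) := by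
    intro y
    by_cases hy : y ∈ Dset
    · have h1 : Set.Ici (3/4 : ℝ) ∈ nhds (if y ∈ Dset then (1:ℝ) else 0) := by
        rw [if_pos hy]
        exact Ici_mem_nhds (by norm_num)
      have h2 := Filter.mem_map.1 (hlim y h1)
      obtain ⟨N, hN⟩ := Filter.mem_atTop_sets.1 h2
      exact ⟨N, fun n hn => by rw [if_pos hy]; exact hN n hn⟩
    · have h1 : Set.Iic (1/4 : ℝ) ∈ nhds (if y ∈ Dset then (1:ℝ) else 0) := by
        rw [if_neg hy]
        exact Iic_mem_nhds (by norm_num)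
      have h2 := Filter.mem_map.1 (hlim y h1)
      obtain ⟨N, hN⟩ := Filter.mem_atTop_sets.1 h2
      exact ⟨N, fun n hn => by rw [if_neg hy]; exact hN n hn⟩
  have hcover : ⋃ p, C p = Set.univ := by
    rw [Set.eq_univ_iff_forall]
    intro y
    obtain ⟨N, hN⟩ := hev y
    rw [Set.mem_iUnion]
    by_cases hy : y ∈ Dset
    · refine ⟨(N, true), ?_⟩
      simp only [hC, if_pos rfl, Set.mem_iInter, Set.mem_preimage, Set.mem_Ici]
      intro n hn
      have := hN n hn
      rwa [if_pos hy] at this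
    · refine ⟨(N, false), ?_⟩
      simp only [hC, if_neg Bool.false_ne_true, Set.mem_iInter, Set.mem_preimage, Set.mem_Iic]
      intro n hn
      have := hN n hn
      rwa [if_neg hy] at this
  obtain ⟨⟨N, b⟩, hint⟩ := nonempty_interior_of_iUnion_of_closed hclosed hcover
  cases b
  · -- on an open set, g n ≤ 1/4 for all n ≥ N; but the open set meets Dset
    obtain ⟨y, hyD, hyi⟩ := dense_Dset.exists_mem_open isOpen_interior hint
    have hmem : y ∈ C (N, false) := interior_subset hyi
    simp only [hC, if_neg Bool.false_ne_true, Set.mem_iInter, Set.mem_preimage,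
      Set.mem_Iic] at hmem
    obtain ⟨M, hM⟩ := hev y
    have h1 := hmem (max N M) (le_max_left _ _)
    have h2 := hM (max N M) (le_max_right _ _)
    rw [if_pos hyD] at h2
    linarith
  · obtain ⟨y, hyD, hyi⟩ := dense_Dset_compl.exists_mem_open isOpen_interior hint
    have hmem : y ∈ C (N, true) := interior_subset hyi
    simp only [hC, if_pos rfl, Set.mem_iInter, Set.mem_preimage, Set.mem_Ici] at hmem
    obtain ⟨M, hM⟩ := hev y
    have h1 := hmem (max N M) (le_max_left _ _)
    have h2 := hM (max N M) (le_max_right _ _)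
    rw [if_neg hyD] at h2
    linarith

/-- density of the set of points with continuous section -/
lemma dense_good : Dense {x : Rinfty | Continuous fun y => FF x y} := by
  classical
  rw [dense_iff_inter_open]
  rintro U hU ⟨x, hxU⟩
  obtain ⟨εs, hεspos, hbox⟩ := rinfty_isOpen_iff.1 hU x hxU
  set n₀ : ℕ := x.2.toFinset.sup id + 1 with hn₀def
  have hn₀S : x.1 n₀ = 0 := by
    by_contra h
    have h1 : n₀ ≤ x.2.toFinset.sup id := Finset.le_sup (f := id) (x.2.mem_toFinset.2 h)
    omega
  set c : ℝ := min (εs n₀) 1 with hcdef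
  have hcpos : 0 < c := lt_min (hεspos n₀) one_pos
  obtain ⟨K₁, hK₁⟩ := pow_unbounded_of_one_lt (1/c) (by norm_num : (1:ℝ) < 2)
  set K : ℕ := max K₁ n₀ with hKdef
  set f' : ℕ → ℝ := fun n => if x.1 n ≠ 0 then x.1 n else if n ≤ K then min (εs n) 1 else 0
    with hf'def
  have hsupp : Function.support f' ⊆ ↑(x.2.toFinset ∪ Finset.range (K+1)) := by
    intro n hn
    simp only [Function.mem_support, hf'def] at hn
    simp only [Finset.coe_union, Set.mem_union, Finset.mem_coe, Finset.mem_range]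
    by_cases h : x.1 n ≠ 0
    · left
      exact x.2.mem_toFinset.2 h
    · right
      rw [if_neg h] at hn
      by_contra hK'
      push_neg at hK'
      rw [if_neg (by omega)] at hn
      exact hn rfl
  set x' : Rinfty := ⟨f', Set.Finite.subset (Finset.finite_toSet _) hsupp⟩ with hx'def
  have hx'val : ∀ n, x'.1 n = if x.1 n ≠ 0 then x.1 n else if n ≤ K then min (εs n) 1 else 0 :=
    fun n => rfl
  have hx'box : ∀ n, |x'.1 n - x.1 n| ≤ εs n := by
    intro n
    rw [hx'val n]
    by_cases h : x.1 n ≠ 0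
    · rw [if_pos h, sub_self, abs_zero]
      exact (hεspos n).le
    · push_neg at h
      rw [if_neg (by rw [h]; exact fun hc => hc rfl), h, sub_zero]
      by_cases h2 : n ≤ K
      · rw [if_pos h2, abs_of_pos (lt_min (hεspos n) one_pos)]
        exact min_le_left _ _
      · rw [if_neg h2, abs_zero]
        exact (hεspos n).le
  have hn₀K : n₀ ≤ K := le_max_right _ _
  have hx'n₀ : x'.1 n₀ = c := by
    rw [hx'val n₀, if_neg (by rw [hn₀S]; exact fun hc => hc rfl), if_pos hn₀K]
  have hNc : c ≤ NN x' := by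
    have h1 := NN_single_le x' n₀
    rwa [hx'n₀, abs_of_pos hcpos] at h1
  have hgood1 : ∀ k, k ≤ K → x'.1 k ≠ 0 := by
    intro k hk
    rw [hx'val k]
    by_cases h : x.1 k ≠ 0
    · rw [if_pos h]
      exact h
    · rw [if_neg h, if_pos hk]
      exact (lt_min (hεspos k) one_pos).ne'
  have hgood2 : ∀ k, K < k → hh k x' = 0 := by
    intro k hk
    apply hh_eq_zero
    have h2k : (2:ℝ)^K₁ ≤ 2^k :=
      pow_le_pow_right₀ one_le_two (le_trans (le_max_left K₁ n₀) hk.le)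
    have h1c : 1 < 2^K₁ * c := by
      rw [div_lt_iff₀ hcpos] at hK₁
      linarith
    have h3 : (2:ℝ)^K₁ * c ≤ 2^k * NN x' := by
      apply mul_le_mul h2k hNc hcpos.le (by positivity)
    linarith
  exact ⟨x', hbox hx'box, continuous_FF_section hgood1 hgood2⟩

end

end RinftyAux

/-- On `X = ℝ^∞` there exists `f : X × ℝ → ℝ` which is continuous in the first
variable and has continuous `y`-sections for a dense set of `x`'s, but which is not a
pointwise limit of any sequence of separately continuous functions. -/
theorem rinfty_example :
    ∃ f : Rinfty × ℝ → ℝ,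
      (∀ y : ℝ, Continuous fun x => f (x, y)) ∧
      Dense {x : Rinfty | Continuous fun y => f (x, y)} ∧
      ¬ ∃ fs : ℕ → Rinfty × ℝ → ℝ,
          (∀ n : ℕ, (∀ y : ℝ, Continuous fun x => fs n (x, y)) ∧
            ∀ x : Rinfty, Continuous fun y => fs n (x, y)) ∧
          ∀ q : Rinfty × ℝ, Filter.Tendsto (fun n => fs n q) Filter.atTop (nhds (f q)) := by
  classical
  refine ⟨fun p => RinftyAux.FF p.1 p.2, fun y => RinftyAux.continuous_FF_x y, ?_, ?_⟩
  · exact RinftyAux.dense_good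
  · rintro ⟨fs, hsc, hconv⟩
    apply RinftyAux.no_baire_indicator (fun n y => fs n (RinftyAux.x₀, y))
      (fun n => (hsc n).2 RinftyAux.x₀)
    intro y
    have h1 := hconv (RinftyAux.x₀, y)
    rwa [show (fun p : Rinfty × ℝ => RinftyAux.FF p.1 p.2) (RinftyAux.x₀, y)
      = RinftyAux.FF RinftyAux.x₀ y from rfl, RinftyAux.FF_x₀ y] at h1
end
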